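/- arXiv:1708.07390 — 9 statements merged into one kernel-verified Lean document; each statement's English description precedes it below -/
import Mathlib

section
/- For a finitely generated ℕ^r-graded module M over S = K[x_1,…,x_r], there exists u_0 ∈ ℕ^r such that rk_S(M) = HF(M,u) for all u ∈ ℕ^r with u ≽ u_0. -/
/-!
Choose finitely many homogeneous generators `g i` of `M` and, among them, a subfamily `v k`
(of degrees `d k`) whose images form a basis of `Q ⊗ M`, `Q = Frac S`; so `rk_S M` is the size of
the subfamily. Every `g i` is torsion modulo the span `F` of the `v k`, and since `F` is a graded
submodule, taking homogeneous components shows that a monomial multiple `x^{w i} g i` lies in `F`.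
Hence for `u` above all `w i + deg g i` and all `d k`, the degree-`u` part of `M` lies in `F`, where
it is spanned by the `x^{u - d k} v k`; these are `K`-independent as the `v k` are `S`-independent.
-/

/-- The rank of a module `M` over an integral domain `R`:
`rk_R(M) = dim_Q (M ⊗_R Q)` where `Q` is the fraction field of `R`. -/
noncomputable def rk (R : Type) [CommRing R] (M : Type) [AddCommGroup M] [Module R M] : ℕ :=
  Module.finrank (FractionRing R) (TensorProduct R (FractionRing R) M)

open MvPolynomial DirectSum Submodule

theorem DirectSum.Decomposition.exists_fin_homogeneous_span_eq_top {R M ι σ : Type*} [Semiring R]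
    [AddCommMonoid M] [Module R M] [Module.Finite R M] [DecidableEq ι] [SetLike σ M]
    [AddSubmonoidClass σ M] (ℳ : ι → σ) [Decomposition ℳ] :
    ∃ (n : ℕ) (g : Fin n → M) (e : Fin n → ι),
      (∀ i, g i ∈ ℳ (e i)) ∧ span R (Set.range g) = ⊤ := by
  classical
  obtain ⟨n, s, hs⟩ := Module.Finite.exists_fin (R := R) (M := M)
  let ι' := Σ j : Fin n, (decompose ℳ (s j)).support
  let eqv := Fintype.equivFin ι'
  refine ⟨_, (fun x : ι' ↦ (decompose ℳ (s x.1) x.2 : M)) ∘ eqv.symm,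
    (fun x : ι' ↦ x.2.1) ∘ eqv.symm, fun i ↦ SetLike.coe_mem _, ?_⟩
  rw [eqv.symm.surjective.range_comp, eq_top_iff, ← hs, span_le]
  rintro _ ⟨j, rfl⟩
  rw [← sum_support_decompose ℳ (s j)]
  exact sum_mem fun u hu ↦ subset_span ⟨⟨j, u, hu⟩, rfl⟩

section Localization

variable {R S M N : Type*} [CommSemiring R] [CommSemiring S] [Algebra R S] [AddCommMonoid M]
  [Module R M] [AddCommMonoid N] [Module R N] [Module S N] [IsScalarTower R S N]

theorem IsLocalizedModule.exists_smul_mem_span_of_mem_span (p : Submonoid R)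
    [IsLocalization p S] (f : M →ₗ[R] N) [IsLocalizedModule p f] {s : Set M} {m : M}
    (hm : f m ∈ span S (f '' s)) : ∃ t ∈ p, t • m ∈ span R s := by
  rw [← localized'_span S p f] at hm
  obtain ⟨y, hy, t, hyt⟩ := hm
  rw [IsLocalizedModule.mk'_eq_iff, Submonoid.smul_def, ← map_smul] at hyt
  obtain ⟨c, hc⟩ := IsLocalizedModule.exists_of_eq (S := p) hyt
  refine ⟨c * t, mul_mem c.2 t.2, ?_⟩
  rw [Submonoid.smul_def, Submonoid.smul_def] at hc
  rw [mul_smul, ← hc]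
  exact smul_mem _ _ hy

theorem IsLocalizedModule.span_image_eq_top (p : Submonoid R) [IsLocalization p S]
    (f : M →ₗ[R] N) [IsLocalizedModule p f] {s : Set M} (hs : span R s = ⊤) :
    span S (f '' s) = ⊤ := by
  rw [← localized'_span S p f, hs, localized'_top]

end Localization

theorem exists_independent_subfamily_card_eq_rk {R M ι : Type} [CommRing R] [IsDomain R]
    [AddCommGroup M] [Module R M] [Finite ι] {g : ι → M} (hg : span R (Set.range g) = ⊤) :
    ∃ (κ : Type) (_ : Fintype κ) (a : κ → ι), rk R M = Fintype.card κ ∧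
      LinearIndependent R (g ∘ a) ∧
      ∀ i, ∃ t ∈ nonZeroDivisors R, t • g i ∈ span R (Set.range (g ∘ a)) := by
  let Q := FractionRing R
  let f := TensorProduct.mk R Q M 1
  obtain ⟨κ, a, ha, hspan_a, hli⟩ := exists_linearIndependent' Q (f ∘ g)
  have : Fintype κ := @Fintype.ofFinite κ (Finite.of_injective a ha)
  have hspanQ : span Q (Set.range ((f ∘ g) ∘ a)) = ⊤ := by
    rw [hspan_a, Set.range_comp]
    exact IsLocalizedModule.span_image_eq_top (nonZeroDivisors R) f hg
  refine ⟨κ, this, a, ?_, (hli.restrict_scalars' R).of_comp f, fun i ↦ ?_⟩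
  · rw [rk, ← finrank_top, ← hspanQ, finrank_span_eq_card hli]
  · refine IsLocalizedModule.exists_smul_mem_span_of_mem_span (S := Q) _ f ?_
    rw [← Set.range_comp, ← Function.comp_assoc, hspanQ]
    exact mem_top

theorem LinearIndependent.monomial_one_smul {σ K M κ : Type*} [CommRing K] [AddCommGroup M]
    [Module (MvPolynomial σ K) M] [Module K M] [IsScalarTower K (MvPolynomial σ K) M]
    {v : κ → M} (hv : LinearIndependent (MvPolynomial σ K) v) (d : κ → σ →₀ ℕ) :
    LinearIndependent K fun k ↦ monomial (d k) (1 : K) • v k := by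
  rw [linearIndependent_iff'] at hv ⊢
  intro s c hc k hk
  refine monomial_eq_zero.mp (hv s (fun k ↦ monomial (d k) (c k)) ?_ k hk)
  simpa only [← smul_assoc, smul_monomial, smul_eq_mul, mul_one] using hc

section Graded

variable {σ K M : Type*} [DecidableEq σ] [CommSemiring K] [AddCommMonoid M]
  [Module (MvPolynomial σ K) M] [Module K M]

def IsMultigraded (ℳ : (σ →₀ ℕ) → Submodule K M) : Prop :=
  ∀ (u v : σ →₀ ℕ) (c : K) (m : M), m ∈ ℳ v → monomial u c • m ∈ ℳ (u + v)

variable {ℳ : (σ →₀ ℕ) → Submodule K M} [Decomposition ℳ]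

theorem IsMultigraded.decompose_smul (hℳ : IsMultigraded ℳ) (p : MvPolynomial σ K)
    {v : σ →₀ ℕ} {m : M} (hm : m ∈ ℳ v) (u : σ →₀ ℕ) :
    (decompose ℳ (p • m) u : M) =
      if v ≤ u then monomial (u - v) (coeff (u - v) p) • m else 0 := by
  have hterm (w : σ →₀ ℕ) : (decompose ℳ (monomial w (coeff w p) • m) u : M) =
      if w = u - v ∧ v ≤ u then monomial w (coeff w p) • m else 0 := by
    have hw : w + v = u ↔ w = u - v ∧ v ≤ u := by
      constructor
      · rintro rfl; simp
      · rintro ⟨rfl, h⟩; exact tsub_add_cancel_of_le h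
    split_ifs with h
    · exact decompose_of_mem_same ℳ (hw.2 h ▸ hℳ w v _ m hm)
    · exact decompose_of_mem_ne ℳ (hℳ w v _ m hm) (mt hw.1 h)
  conv_lhs => rw [p.as_sum, Finset.sum_smul, decompose_sum, DFinsupp.finsetSum_apply,
    AddSubmonoidClass.coe_finsetSum]
  simp_rw [hterm, ite_and]
  rw [Finset.sum_ite_eq']
  split_ifs with h1 h2 <;> simp_all

variable [IsScalarTower K (MvPolynomial σ K) M] {ι : Type*} [Fintype ι] {g : ι → M}
  {e : ι → σ →₀ ℕ}

theorem IsMultigraded.decompose_mem_span_monomial_smul (hℳ : IsMultigraded ℳ)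
    (hg : ∀ i, g i ∈ ℳ (e i)) {z : M} (hz : z ∈ span (MvPolynomial σ K) (Set.range g))
    (u : σ →₀ ℕ) :
    (decompose ℳ z u : M) ∈
      span K ((fun i ↦ monomial (u - e i) (1 : K) • g i) '' {i | e i ≤ u}) := by
  obtain ⟨c, rfl⟩ := (mem_span_range_iff_exists_fun _).mp hz
  rw [decompose_sum, DFinsupp.finsetSum_apply, AddSubmonoidClass.coe_finsetSum]
  refine sum_mem fun i _ ↦ ?_
  rw [hℳ.decompose_smul _ (hg i)]
  split_ifs with h
  · rw [← mul_one (coeff _ _), ← smul_eq_mul, ← smul_monomial, smul_assoc]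
    exact smul_mem _ _ (subset_span ⟨i, h, rfl⟩)
  · exact zero_mem _

theorem IsMultigraded.mem_span_monomial_smul_of_mem (hℳ : IsMultigraded ℳ)
    (hg : ∀ i, g i ∈ ℳ (e i)) {u : σ →₀ ℕ} {z : M} (hzu : z ∈ ℳ u)
    (hz : z ∈ span (MvPolynomial σ K) (Set.range g)) :
    z ∈ span K ((fun i ↦ monomial (u - e i) (1 : K) • g i) '' {i | e i ≤ u}) :=
  decompose_of_mem_same ℳ hzu ▸ hℳ.decompose_mem_span_monomial_smul hg hz u

theorem IsMultigraded.isHomogeneous_span (hℳ : IsMultigraded ℳ) (hg : ∀ i, g i ∈ ℳ (e i)) :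
    SetLike.IsHomogeneous ℳ (span (MvPolynomial σ K) (Set.range g)) := by
  intro u z hz
  refine (span_le (p := (span (MvPolynomial σ K) (Set.range g)).restrictScalars K)).mpr ?_
    (hℳ.decompose_mem_span_monomial_smul hg hz u)
  rintro _ ⟨i, -, rfl⟩
  exact (span (MvPolynomial σ K) (Set.range g)).smul_mem _ (subset_span ⟨i, rfl⟩)

end Graded

section GradedOverField

variable {σ K M : Type*} [DecidableEq σ] [Field K] [AddCommMonoid M]
  [Module (MvPolynomial σ K) M] [Module K M] [IsScalarTower K (MvPolynomial σ K) M]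
  {ℳ : (σ →₀ ℕ) → Submodule K M} [Decomposition ℳ] {ι : Type*} [Fintype ι] {g : ι → M}
  {e : ι → σ →₀ ℕ}

theorem IsMultigraded.exists_monomial_smul_mem_of_smul_mem (hℳ : IsMultigraded ℳ)
    (hg : ∀ i, g i ∈ ℳ (e i)) {p : MvPolynomial σ K} (hp : p ≠ 0) {v : σ →₀ ℕ} {m : M}
    (hm : m ∈ ℳ v) (hpm : p • m ∈ span (MvPolynomial σ K) (Set.range g)) :
    ∃ w : σ →₀ ℕ, monomial w (1 : K) • m ∈ span (MvPolynomial σ K) (Set.range g) := by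
  obtain ⟨w, hw⟩ := ne_zero_iff.mp hp
  have hcomp := hℳ.isHomogeneous_span hg (w + v) hpm
  rw [hℳ.decompose_smul p hm, if_pos le_add_self, add_tsub_cancel_right] at hcomp
  refine ⟨w, ?_⟩
  rw [← inv_mul_cancel₀ hw, ← smul_eq_mul, ← smul_monomial, smul_assoc]
  exact smul_of_tower_mem _ _ hcomp

theorem IsMultigraded.eq_span_monomial_smul (hℳ : IsMultigraded ℳ) (hg : ∀ i, g i ∈ ℳ (e i))
    (hspan : span (MvPolynomial σ K) (Set.range g) = ⊤) {κ : Type*} [Fintype κ] {v : κ → M}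
    {d : κ → σ →₀ ℕ} (hv : ∀ k, v k ∈ ℳ (d k)) {w : ι → σ →₀ ℕ}
    (hw : ∀ i, monomial (w i) (1 : K) • g i ∈ span (MvPolynomial σ K) (Set.range v))
    {u : σ →₀ ℕ} (hgu : ∀ i, w i + e i ≤ u) (hvu : ∀ k, d k ≤ u) :
    ℳ u = span K (Set.range fun k ↦ monomial (u - d k) (1 : K) • v k) := by
  have shift {x : M} {a : σ →₀ ℕ} (hx : x ∈ ℳ a) (ha : a ≤ u) :
      monomial (u - a) (1 : K) • x ∈ ℳ u := by
    simpa only [tsub_add_cancel_of_le ha] using hℳ (u - a) a 1 x hx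
  refine le_antisymm (fun z hz ↦ ?_) (span_le.mpr ?_)
  · refine span_le.mpr ?_ (hℳ.mem_span_monomial_smul_of_mem hg hz (hspan ▸ mem_top))
    rintro _ ⟨i, hi, rfl⟩
    have hmem : monomial (u - e i) (1 : K) • g i ∈ span (MvPolynomial σ K) (Set.range v) := by
      rw [← tsub_add_cancel_of_le (le_tsub_of_add_le_right (hgu i)), ← one_mul (1 : K),
        ← monomial_mul, mul_smul]
      exact smul_mem _ _ (hw i)
    have huniv : {k | d k ≤ u} = Set.univ := Set.eq_univ_of_forall hvu
    simpa only [huniv, Set.image_univ, SetLike.mem_coe] using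
      hℳ.mem_span_monomial_smul_of_mem hv (shift (hg i) hi) hmem
  · rintro _ ⟨k, rfl⟩
    exact shift (hv k) (hvu k)

end GradedOverField

theorem statement2 (K : Type) [Field K] (r : ℕ)
    (M : Type) [AddCommGroup M] [Module (MvPolynomial (Fin r) K) M]
    [Module K M] [IsScalarTower K (MvPolynomial (Fin r) K) M]
    [Module.Finite (MvPolynomial (Fin r) K) M]
    (ℳ : (Fin r →₀ ℕ) → Submodule K M)
    (hM : DirectSum.IsInternal ℳ)
    (hMgr : ∀ (u v : Fin r →₀ ℕ) (c : K) (m : M), m ∈ ℳ v →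
      (MvPolynomial.monomial u c) • m ∈ ℳ (u + v)) :
    ∃ u₀ : Fin r →₀ ℕ, ∀ u : Fin r →₀ ℕ, u₀ ≤ u →
      rk (MvPolynomial (Fin r) K) M = Module.finrank K (ℳ u) := by
  let _ : Decomposition ℳ := hM.chooseDecomposition
  have hℳ : IsMultigraded ℳ := hMgr
  obtain ⟨n, g, e, hg, hspan⟩ :=
    Decomposition.exists_fin_homogeneous_span_eq_top (R := MvPolynomial (Fin r) K) ℳ
  obtain ⟨κ, _, a, hrk, hli, htorsion⟩ := exists_independent_subfamily_card_eq_rk hspan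
  have hmonomial (i : Fin n) : ∃ w : Fin r →₀ ℕ,
      monomial w (1 : K) • g i ∈ span (MvPolynomial (Fin r) K) (Set.range (g ∘ a)) := by
    obtain ⟨t, ht, hti⟩ := htorsion i
    exact hℳ.exists_monomial_smul_mem_of_smul_mem (fun k ↦ hg (a k))
      (nonZeroDivisors.ne_zero ht) (hg i) hti
  choose w hw using hmonomial
  refine ⟨∑ i, (w i + e i) + ∑ k, e (a k), fun u hu ↦ ?_⟩
  have hgu (i : Fin n) : w i + e i ≤ u :=
    (Finset.single_le_sum (fun _ _ ↦ zero_le) (Finset.mem_univ i)).trans (le_self_add.trans hu)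
  have hvu (k : κ) : e (a k) ≤ u :=
    (Finset.single_le_sum (fun _ _ ↦ zero_le) (Finset.mem_univ k)).trans (le_add_self.trans hu)
  rw [hℳ.eq_span_monomial_smul hg hspan (fun k ↦ hg (a k)) hw hgu hvu]
  exact hrk.trans (finrank_span_eq_card (hli.monomial_one_smul _)).symm
end

section
/- For a finitely generated ℕ^r-graded module M over S = K[x_1,…,x_r], there exists a polynomial P ∈ ℤ[t_1,…,t_r] such that, as an identity of formal power series in ℤ[[t_1,…,t_r]], ∏_{i=1}^r (1−t_i) · HS(M,t) = P(t_1,…,t_r); that is, HS(M,t) = P(t_1,…,t_r)/∏_{i=1}^r (1−t_i). -/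
/-!
Choose homogeneous generators `m₀, …, m_{s-1}` of `M`, of degrees `a₀, …, a_{s-1}`. In degree `u`
the translates `x^(u - a_j) m_j` (for `a_j ≤ u`) span `M_u`, and extracting a basis greedily shows
that `HF(M, u)` counts the `j` with `a_j ≤ u` whose translate does not already lie in the `S`-span
of `m₀, …, m_{j-1}`. The degrees where it does lie there form an upper set `E_j ⊆ a_j + ℕ^r`, so
`HS(M) = ∑_j (𝟙[a_j + ℕ^r] - 𝟙[E_j])`. By Dickson's lemma every upper set of `ℕ^r` is a finite
union of orthants `a + ℕ^r`; multiplying the indicator series of an orthant by `∏ (1 - t_i)` gives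
the monomial `t^a`, and inclusion–exclusion reduces finite unions to orthants.
-/

open Finset

open scoped Classical in
theorem finrank_span_image_Iio {K V : Type*} [DivisionRing K] [AddCommGroup V] [Module K V]
    (v : ℕ → V) (n : ℕ) :
    Module.finrank K (Submodule.span K (v '' Set.Iio n)) =
      ∑ j ∈ range n, if v j ∈ Submodule.span K (v '' Set.Iio j) then 0 else 1 := by
  induction n with
  | zero =>
    rw [Set.Iio_zero_eq_empty, Set.image_empty, Submodule.span_empty, finrank_bot]
    rfl
  | succ n ih =>
    have : FiniteDimensional K (Submodule.span K (v '' Set.Iio n)) :=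
      FiniteDimensional.span_of_finite K ((Set.finite_Iio n).image v)
    rw [sum_range_succ, ← ih, Set.Iio_add_one_eq_Iic, ← Set.Iio_insert, Set.image_insert_eq,
      Submodule.span_insert, sup_comm]
    split_ifs with h
    · rw [sup_eq_left.2 ((Submodule.span_singleton_le_iff_mem _ _).2 h), add_zero]
    · have hsum := Submodule.finrank_sup_add_finrank_inf_eq (Submodule.span K (v '' Set.Iio n))
        (K ∙ v n)
      rwa [(Submodule.disjoint_span_singleton_of_notMem h).eq_bot, finrank_bot, add_zero,
        finrank_span_singleton (ne_of_mem_of_not_mem (Submodule.zero_mem _) h).symm] at hsum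

theorem IsUpperSet.exists_finset_eq_upperClosure {α : Type*} [PartialOrder α]
    [WellQuasiOrderedLE α] {s : Set α} (hs : IsUpperSet s) :
    ∃ B : Finset α, (upperClosure (B : Set α) : Set α) = s := by
  have hpwo := Set.isPWO_of_wellQuasiOrderedLE s
  have hfin : {x | Minimal (· ∈ s) x}.Finite :=
    (setOfPred_minimal_antichain _).finite_of_partiallyWellOrderedOn
      (hpwo.mono (setOfPred_minimal_subset s))
  refine ⟨hfin.toFinset, Set.ext fun x => ⟨?_, fun hx => ?_⟩⟩
  · rintro ⟨b, hb, hbx⟩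
    exact hs hbx (hfin.mem_toFinset.1 hb).prop
  · obtain ⟨b, hbx, hb⟩ := hpwo.exists_le_minimal hx
    exact ⟨b, hfin.mem_toFinset.2 hb, hbx⟩

namespace MvPowerSeries

variable {σ : Type*}

noncomputable def indicatorSeries (s : Set (σ →₀ ℕ)) : MvPowerSeries σ ℤ := s.indicator 1

lemma coeff_indicatorSeries (s : Set (σ →₀ ℕ)) (u : σ →₀ ℕ) :
    coeff u (indicatorSeries s) = s.indicator 1 u := rfl

lemma indicatorSeries_union (s t : Set (σ →₀ ℕ)) :
    indicatorSeries (s ∪ t) = indicatorSeries s + indicatorSeries t - indicatorSeries (s ∩ t) :=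
  eq_sub_of_add_eq (Set.indicator_union_add_inter _ _ _)

lemma indicatorSeries_Ici (a : σ →₀ ℕ) :
    indicatorSeries (Set.Ici a) = monomial a 1 * indicatorSeries Set.univ := by
  ext u
  rw [coeff_monomial_mul]
  split_ifs with h <;> simp [coeff_indicatorSeries, h]

lemma prod_one_sub_X_mul_indicatorSeries_univ [DecidableEq σ] (T : Finset σ) :
    (∏ i ∈ T, (1 - X i)) * indicatorSeries Set.univ =
      indicatorSeries {u : σ →₀ ℕ | ∀ i ∈ T, u i = 0} := by
  induction T using Finset.induction_on with
  | empty => rw [prod_empty, one_mul]; congr; simp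
  | insert j T hj ih =>
    ext u
    have hshift : (∀ i ∈ T, (u - Finsupp.single j 1 : σ →₀ ℕ) i = 0) ↔ ∀ i ∈ T, u i = 0 :=
      forall₂_congr fun i hi => by simp [show j ≠ i by rintro rfl; exact hj hi]
    rw [prod_insert hj, mul_assoc, ih, sub_mul, one_mul, map_sub, X, coeff_monomial_mul]
    simp only [coeff_indicatorSeries, Set.indicator_apply, Set.mem_ofPred_eq, hshift,
      forall_mem_insert, Pi.one_apply, Finsupp.single_le_iff]
    by_cases hT : ∀ i ∈ T, u i = 0 <;> by_cases hu : u j = 0 <;>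
      simp [hT, hu, Nat.one_le_iff_ne_zero]

variable [Fintype σ]

lemma prod_one_sub_X_mul_indicatorSeries_Ici (a : σ →₀ ℕ) :
    (∏ i, (1 - X i)) * indicatorSeries (Set.Ici a) = monomial a 1 := by
  classical
  have hone : indicatorSeries {u : σ →₀ ℕ | ∀ i ∈ univ, u i = 0} = 1 := by
    ext u
    simp [coeff_indicatorSeries, coeff_one, Set.indicator_apply, Finsupp.ext_iff]
  rw [indicatorSeries_Ici, mul_left_comm, prod_one_sub_X_mul_indicatorSeries_univ, hone, mul_one]

variable (σ) in
def withPolynomialNumerator : Submodule ℤ (MvPowerSeries σ ℤ) where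
  carrier := {F | ∃ P : MvPolynomial σ ℤ, (∏ i, (1 - X i)) * F = P}
  zero_mem' := ⟨0, by simp⟩
  add_mem' := by
    rintro F G ⟨P, hP⟩ ⟨Q, hQ⟩
    exact ⟨P + Q, by rw [mul_add, hP, hQ, MvPolynomial.coe_add]⟩
  smul_mem' := by
    rintro z F ⟨P, hP⟩
    refine ⟨z • P, ?_⟩
    rw [mul_smul_comm, hP]
    exact (map_zsmul MvPolynomial.coeToMvPowerSeries.ringHom z P).symm

lemma indicatorSeries_Ici_mem_withPolynomialNumerator (a : σ →₀ ℕ) :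
    indicatorSeries (Set.Ici a) ∈ withPolynomialNumerator σ :=
  ⟨MvPolynomial.monomial a 1, by
    rw [prod_one_sub_X_mul_indicatorSeries_Ici, MvPolynomial.coe_monomial]⟩

-- Intersecting with `Ici c` keeps the inclusion–exclusion step inside the induction hypothesis.
lemma indicatorSeries_Ici_inter_upperClosure_mem_withPolynomialNumerator
    (B : Finset (σ →₀ ℕ)) (c : σ →₀ ℕ) :
    indicatorSeries (Set.Ici c ∩ upperClosure (B : Set (σ →₀ ℕ))) ∈
      withPolynomialNumerator σ := by
  classical
  induction B using Finset.induction_on generalizing c with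
  | empty =>
    convert zero_mem (withPolynomialNumerator σ)
    ext u
    simp [coeff_indicatorSeries]
  | insert a B _ ih =>
    have hinsert : Set.Ici c ∩ upperClosure ((insert a B : Finset (σ →₀ ℕ)) : Set (σ →₀ ℕ)) =
        Set.Ici (c ⊔ a) ∪ (Set.Ici c ∩ upperClosure (B : Set (σ →₀ ℕ))) := by
      ext u
      simp only [coe_insert, Set.mem_inter_iff, Set.mem_Ici, SetLike.mem_coe, mem_upperClosure,
        Set.mem_insert_iff, exists_eq_or_imp, Set.mem_union, sup_le_iff]
      tauto
    have hinter : Set.Ici (c ⊔ a) ∩ (Set.Ici c ∩ upperClosure (B : Set (σ →₀ ℕ))) =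
        Set.Ici (c ⊔ a) ∩ upperClosure (B : Set (σ →₀ ℕ)) := by
      rw [← Set.inter_assoc, Set.inter_eq_left.2 (Set.Ici_subset_Ici.2 le_sup_left)]
    rw [hinsert, indicatorSeries_union, hinter]
    exact sub_mem (add_mem (indicatorSeries_Ici_mem_withPolynomialNumerator _) (ih c))
      (ih (c ⊔ a))

end MvPowerSeries

open MvPowerSeries in
theorem IsUpperSet.indicatorSeries_mem_withPolynomialNumerator {σ : Type*} [Fintype σ]
    {s : Set (σ →₀ ℕ)} (hs : IsUpperSet s) :
    indicatorSeries s ∈ withPolynomialNumerator σ := by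
  obtain ⟨B, rfl⟩ := hs.exists_finset_eq_upperClosure
  simpa using indicatorSeries_Ici_inter_upperClosure_mem_withPolynomialNumerator B 0

open Submodule DirectSum

lemma exists_homogeneous_generators {ι R K M : Type*} [Zero ι] [DecidableEq ι] [Semiring R]
    [Semiring K] [AddCommMonoid M] [Module R M] [Module K M] (ℳ : ι → Submodule K M)
    [Decomposition ℳ] [Module.Finite R M] :
    ∃ (s : ℕ) (a : ℕ → ι) (m : ℕ → M), (∀ j, m j ∈ ℳ (a j)) ∧ span R (m '' Set.Iio s) = ⊤ := by
  classical
  obtain ⟨T, hT⟩ := Module.Finite.fg_top (R := R) (M := M)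
  let G : Finset M :=
    T.biUnion fun t => (decompose ℳ t).support.image fun d => (decompose ℳ t d : M)
  have hG : span R (G : Set M) = ⊤ := by
    refine eq_top_iff.2 (hT ▸ span_le.2 fun t ht => ?_)
    rw [SetLike.mem_coe, ← sum_support_decompose ℳ t]
    exact sum_mem fun d hd => subset_span (mem_biUnion.2 ⟨t, ht, mem_image_of_mem _ hd⟩)
  let m : ℕ → M := fun j => G.toList.getD j 0
  have hmG : ∀ j < G.toList.length, m j ∈ G := fun j hj =>
    mem_toList.1 (by simp only [m, List.getD_eq_getElem _ _ hj, List.getElem_mem])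
  have hm : ∀ j, ∃ d, m j ∈ ℳ d := by
    intro j
    rcases lt_or_ge j G.toList.length with hj | hj
    · have := hmG j hj
      simp only [G, mem_biUnion, mem_image] at this
      obtain ⟨t, -, d, -, hd⟩ := this
      exact ⟨d, hd ▸ (decompose ℳ t d).2⟩
    · exact ⟨0, by simp only [m, List.getD_eq_default _ _ hj, zero_mem]⟩
  choose a ha using hm
  refine ⟨G.toList.length, a, m, ha, hG ▸ congrArg _ (Set.ext fun x => ⟨?_, fun hx => ?_⟩)⟩
  · rintro ⟨j, hj, rfl⟩
    exact hmG j hj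
  · obtain ⟨j, hj, rfl⟩ := List.mem_iff_getElem.1 (mem_toList.2 hx)
    exact ⟨j, hj, List.getD_eq_getElem _ _ hj⟩

open MvPolynomial

section Graded

variable {σ M : Type*} (K : Type*) [Field K] [AddCommGroup M] [Module (MvPolynomial σ K) M]

noncomputable def monomialTranslate (a : σ →₀ ℕ) (m : M) (u : σ →₀ ℕ) : M :=
  if a ≤ u then monomial (u - a) (1 : K) • m else 0

def redundantDegrees (a : ℕ → σ →₀ ℕ) (m : ℕ → M) (j : ℕ) : Set (σ →₀ ℕ) :=
  {u | a j ≤ u ∧ monomial (u - a j) (1 : K) • m j ∈ span (MvPolynomial σ K) (m '' Set.Iio j)}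

variable {K}

lemma monomialTranslate_mem {p : Submodule (MvPolynomial σ K) M} {m : M} (hm : m ∈ p)
    (a u : σ →₀ ℕ) : monomialTranslate K a m u ∈ p := by
  unfold monomialTranslate
  split_ifs
  exacts [p.smul_mem _ hm, p.zero_mem]

lemma isUpperSet_redundantDegrees (a : ℕ → σ →₀ ℕ) (m : ℕ → M) (j : ℕ) :
    IsUpperSet (redundantDegrees K a m j) := by
  rintro u u' huu' ⟨hau, hmem⟩
  refine ⟨hau.trans huu', ?_⟩
  have := smul_mem _ (monomial (u' - u) (1 : K)) hmem
  rwa [← mul_smul, monomial_mul, one_mul, tsub_add_tsub_cancel huu' hau] at this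

variable [Module K M] (ℳ : (σ →₀ ℕ) → Submodule K M)
  (hℳ : ∀ (u v : σ →₀ ℕ) (c : K) (m : M), m ∈ ℳ v → monomial u c • m ∈ ℳ (u + v))
include hℳ

lemma monomialTranslate_mem_graded {a : σ →₀ ℕ} {m : M} (hm : m ∈ ℳ a) (u : σ →₀ ℕ) :
    monomialTranslate K a m u ∈ ℳ u := by
  unfold monomialTranslate
  split_ifs with h
  · simpa [tsub_add_cancel_of_le h] using hℳ (u - a) a 1 m hm
  · exact zero_mem _

variable [IsScalarTower K (MvPolynomial σ K) M] [DecidableEq (σ →₀ ℕ)] [Decomposition ℳ]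

lemma coe_decompose_smul_of_mem {a : σ →₀ ℕ} {m : M} (hm : m ∈ ℳ a) (p : MvPolynomial σ K)
    (u : σ →₀ ℕ) :
    (decompose ℳ (p • m) u : M) = coeff (u - a) p • monomialTranslate K a m u := by
  classical
  induction p using MvPolynomial.induction_on' with
  | monomial v c =>
    by_cases h : v + a = u
    · subst h
      rw [decompose_of_mem_same ℳ (hℳ v a c m hm), monomialTranslate, if_pos le_add_self,
        add_tsub_cancel_right, coeff_monomial, if_pos rfl, ← smul_assoc, smul_monomial,
        smul_eq_mul, mul_one]
    · rw [decompose_of_mem_ne ℳ (hℳ v a c m hm) h, monomialTranslate]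
      split_ifs with hau
      · rw [coeff_monomial, if_neg (by rintro rfl; exact h (tsub_add_cancel_of_le hau)),
          zero_smul]
      · rw [smul_zero]
  | add p q hp hq =>
    rw [add_smul, decompose_add, DirectSum.add_apply, Submodule.coe_add, hp, hq, coeff_add,
      add_smul]

lemma mem_span_image_monomialTranslate {ι : Type*} {a : ι → σ →₀ ℕ} {m : ι → M}
    (hm : ∀ i, m i ∈ ℳ (a i)) {T : Set ι} {u : σ →₀ ℕ} {x : M} (hxu : x ∈ ℳ u)
    (hx : x ∈ span (MvPolynomial σ K) (m '' T)) :
    x ∈ span K ((fun i => monomialTranslate K (a i) (m i) u) '' T) := by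
  obtain ⟨l, hl, rfl⟩ := (Finsupp.mem_span_image_iff_linearCombination _).1 hx
  rw [← decompose_of_mem_same ℳ hxu, Finsupp.linearCombination_apply, Finsupp.sum,
    decompose_sum, DFinsupp.finsetSum_apply, Submodule.coe_sum]
  refine sum_mem fun i hi => ?_
  rw [coe_decompose_smul_of_mem ℳ hℳ (hm i)]
  exact smul_mem _ _ (subset_span ⟨i, hl hi, rfl⟩)

variable {a : ℕ → σ →₀ ℕ} {m : ℕ → M} (hm : ∀ j, m j ∈ ℳ (a j))
include hm

lemma monomialTranslate_mem_span_iff (j : ℕ) (u : σ →₀ ℕ) :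
    monomialTranslate K (a j) (m j) u ∈
        span K ((fun i => monomialTranslate K (a i) (m i) u) '' Set.Iio j) ↔
      (a j ≤ u → u ∈ redundantDegrees K a m j) := by
  by_cases h : a j ≤ u
  · have hle : span K ((fun i => monomialTranslate K (a i) (m i) u) '' Set.Iio j) ≤
        (span (MvPolynomial σ K) (m '' Set.Iio j)).restrictScalars K :=
      span_le.2 <| Set.image_subset_iff.2 fun i hi =>
        monomialTranslate_mem (subset_span (Set.mem_image_of_mem m hi)) _ _
    simp only [h, true_imp_iff, redundantDegrees, Set.mem_ofPred_eq, true_and]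
    rw [monomialTranslate, if_pos h]
    exact ⟨fun hx => hle hx, mem_span_image_monomialTranslate ℳ hℳ hm <|
      by simpa [tsub_add_cancel_of_le h] using hℳ (u - a j) (a j) 1 (m j) (hm j)⟩
  · simp only [h, false_imp_iff, iff_true]
    rw [monomialTranslate, if_neg h]
    exact zero_mem _

lemma finrank_eq_sum_indicator {s : ℕ}
    (hgen : span (MvPolynomial σ K) (m '' Set.Iio s) = ⊤) (u : σ →₀ ℕ) :
    (Module.finrank K (ℳ u) : ℤ) = ∑ j ∈ range s,
      ((Set.Ici (a j)).indicator 1 u - (redundantDegrees K a m j).indicator 1 u) := by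
  have hu : ℳ u = span K ((fun i => monomialTranslate K (a i) (m i) u) '' Set.Iio s) :=
    le_antisymm (fun x hx => mem_span_image_monomialTranslate ℳ hℳ hm hx (hgen ▸ mem_top))
      (span_le.2 <| Set.image_subset_iff.2 fun i _ =>
        monomialTranslate_mem_graded ℳ hℳ (hm i) u)
  rw [hu, finrank_span_image_Iio, Nat.cast_sum]
  refine sum_congr rfl fun j _ => ?_
  rw [monomialTranslate_mem_span_iff ℳ hℳ hm]
  by_cases h1 : a j ≤ u <;> by_cases h2 : u ∈ redundantDegrees K a m j <;> simp [h1, h2]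
  exact h1 h2.1

end Graded

theorem statement3 (K : Type) [Field K] (r : ℕ)
    (M : Type) [AddCommGroup M] [Module (MvPolynomial (Fin r) K) M]
    [Module K M] [IsScalarTower K (MvPolynomial (Fin r) K) M]
    [Module.Finite (MvPolynomial (Fin r) K) M]
    (ℳ : (Fin r →₀ ℕ) → Submodule K M)
    (hM : DirectSum.IsInternal ℳ)
    (hMgr : ∀ (u v : Fin r →₀ ℕ) (c : K) (m : M), m ∈ ℳ v →
      (MvPolynomial.monomial u c) • m ∈ ℳ (u + v))
    -- `HS` is the multigraded Hilbert series of `M`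
    (HS : MvPowerSeries (Fin r) ℤ)
    (hHS : ∀ u : Fin r →₀ ℕ, MvPowerSeries.coeff u HS = (Module.finrank K (ℳ u) : ℤ)) :
    ∃ P : MvPolynomial (Fin r) ℤ,
      (∏ i : Fin r, (1 - MvPowerSeries.X i)) * HS = ↑P := by
  let := hM.chooseDecomposition
  obtain ⟨s, a, m, hm, hgen⟩ := exists_homogeneous_generators (R := MvPolynomial (Fin r) K) ℳ
  have hHS_eq : HS = ∑ j ∈ range s, (MvPowerSeries.indicatorSeries (Set.Ici (a j)) -
      MvPowerSeries.indicatorSeries (redundantDegrees K a m j)) := by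
    ext u
    simp only [hHS, finrank_eq_sum_indicator ℳ hMgr hm hgen, map_sum, map_sub,
      MvPowerSeries.coeff_indicatorSeries]
  rw [hHS_eq]
  exact sum_mem fun j _ => sub_mem (isUpperSet_Ici _).indicatorSeries_mem_withPolynomialNumerator
    (isUpperSet_redundantDegrees a m j).indicatorSeries_mem_withPolynomialNumerator
end

section
/- Let M be a finitely generated ℕ²-graded module over S = K[x_1,x_2]. Suppose there exist natural numbers m_1, m_2, an integer C, integers α_0,…,α_{m_1−1} and β_0,…,β_{m_2−1}, and a polynomial R ∈ ℤ[t_1,t_2] such that, as an identity of formal power series, HS(M,t) = C·t_1^{m_1}t_2^{m_2}/((1−t_1)(1−t_2)) + Σ_{i=0}^{m_1−1} α_i·t_1^i/(1−t_2) + Σ_{j=0}^{m_2−1} β_j·t_2^j/(1−t_1) + R(t_1,t_2). Then C = rk_S(M). -/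
namespace HilbertSeriesRank

open Finset

section Coefficients

open MvPowerSeries

variable {R : Type*} [CommRing R]

noncomputable def bideg (a b : ℕ) : Fin 2 →₀ ℕ := Finsupp.single 0 a + Finsupp.single 1 b

@[simp] lemma bideg_apply_zero (a b : ℕ) : bideg a b 0 = a := by simp [bideg]

@[simp] lemma bideg_apply_one (a b : ℕ) : bideg a b 1 = b := by simp [bideg]

lemma degree_bideg (a b : ℕ) : (bideg a b).degree = a + b := by simp [bideg]

lemma coeff_bideg_succ_X_zero_mul (F : MvPowerSeries (Fin 2) R) (a b : ℕ) :
    coeff (bideg (a + 1) b) (X 0 * F) = coeff (bideg a b) F := by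
  have : bideg (a + 1) b = Finsupp.single 0 1 + bideg a b := by
    simp only [bideg, Finsupp.single_add]; abel
  rw [this, X_def, coeff_add_monomial_mul, one_mul]

lemma coeff_bideg_succ_X_one_mul (F : MvPowerSeries (Fin 2) R) (a b : ℕ) :
    coeff (bideg a (b + 1)) (X 1 * F) = coeff (bideg a b) F := by
  have : bideg a (b + 1) = Finsupp.single 1 1 + bideg a b := by
    simp only [bideg, Finsupp.single_add]; abel
  rw [this, X_def, coeff_add_monomial_mul, one_mul]

lemma coeff_bideg_zero_X_zero_mul (F : MvPowerSeries (Fin 2) R) (b : ℕ) :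
    coeff (bideg 0 b) (X 0 * F) = 0 := by
  rw [X_def, coeff_monomial_mul, if_neg]
  simp [Finsupp.le_def, Fin.forall_fin_two]

lemma coeff_bideg_zero_X_one_mul (F : MvPowerSeries (Fin 2) R) (a : ℕ) :
    coeff (bideg a 0) (X 1 * F) = 0 := by
  rw [X_def, coeff_monomial_mul, if_neg]
  simp [Finsupp.le_def, Fin.forall_fin_two]

lemma sum_coeff_one_sub_X_zero_mul (F : MvPowerSeries (Fin 2) R) (n b : ℕ) :
    ∑ a ∈ range (n + 1), coeff (bideg a b) ((1 - X 0) * F) = coeff (bideg n b) F := by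
  induction n with
  | zero => simp [sub_mul, coeff_bideg_zero_X_zero_mul]
  | succ n ih =>
    rw [sum_range_succ, ih, sub_mul, one_mul, map_sub, coeff_bideg_succ_X_zero_mul]
    abel

lemma sum_coeff_one_sub_X_one_mul (F : MvPowerSeries (Fin 2) R) (a k : ℕ) :
    ∑ b ∈ range (k + 1), coeff (bideg a b) ((1 - X 1) * F) = coeff (bideg a k) F := by
  induction k with
  | zero => simp [sub_mul, coeff_bideg_zero_X_one_mul]
  | succ k ih =>
    rw [sum_range_succ, ih, sub_mul, one_mul, map_sub, coeff_bideg_succ_X_one_mul]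
    abel

noncomputable def rectSum (n k : ℕ) : MvPowerSeries (Fin 2) R →ₗ[R] R :=
  ∑ a ∈ range (n + 1), ∑ b ∈ range (k + 1), coeff (bideg a b)

lemma rectSum_apply (n k : ℕ) (F : MvPowerSeries (Fin 2) R) :
    rectSum n k F = ∑ a ∈ range (n + 1), ∑ b ∈ range (k + 1), coeff (bideg a b) F := by
  simp [rectSum]

lemma rectSum_one_sub_X_zero_mul_one_sub_X_one_mul (n k : ℕ) (F : MvPowerSeries (Fin 2) R) :
    rectSum n k ((1 - X 0) * (1 - X 1) * F) = coeff (bideg n k) F := by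
  rw [rectSum_apply, sum_comm, mul_assoc]
  simp only [sum_coeff_one_sub_X_zero_mul, sum_coeff_one_sub_X_one_mul]

lemma rectSum_one_sub_X_zero_mul (n k : ℕ) (F : MvPowerSeries (Fin 2) R) :
    rectSum n k ((1 - X 0) * F) = ∑ b ∈ range (k + 1), coeff (bideg n b) F := by
  rw [rectSum_apply, sum_comm]
  simp only [sum_coeff_one_sub_X_zero_mul]

lemma rectSum_one_sub_X_one_mul (n k : ℕ) (F : MvPowerSeries (Fin 2) R) :
    rectSum n k ((1 - X 1) * F) = ∑ a ∈ range (n + 1), coeff (bideg a k) F := by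
  simp only [rectSum_apply, sum_coeff_one_sub_X_one_mul]

lemma rectSum_C_mul_X_pow_mul_X_pow {m₁ m₂ n k : ℕ} (hn : m₁ ≤ n) (hk : m₂ ≤ k) (c : R) :
    rectSum n k (C c * X 0 ^ m₁ * X 1 ^ m₂) = c := by
  have hmono : C c * X 0 ^ m₁ * X 1 ^ m₂ = monomial (bideg m₁ m₂) c := by
    rw [X_pow_eq, X_pow_eq, ← monomial_zero_eq_C_apply, monomial_mul_monomial,
      monomial_mul_monomial, zero_add, mul_one, mul_one, bideg]
  simp [hmono, rectSum_apply, coeff_monomial, bideg, Finsupp.ext_iff, Fin.forall_fin_two, ite_and,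
    Nat.lt_succ_of_le hn, Nat.lt_succ_of_le hk]

lemma coeff_bideg_sum_C_mul_X_zero_pow {m n : ℕ} (hn : m ≤ n) (b : ℕ) (α : ℕ → R) :
    coeff (bideg n b) (∑ i ∈ range m, C (α i) * X 0 ^ i) = 0 := by
  refine (map_sum _ _ _).trans (sum_eq_zero fun i hi => ?_)
  rw [coeff_C_mul, coeff_X_pow, if_neg, mul_zero]
  intro h
  have := congrArg (· 0) h
  simp at this hi
  omega

lemma coeff_bideg_sum_C_mul_X_one_pow {m k : ℕ} (hk : m ≤ k) (a : ℕ) (β : ℕ → R) :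
    coeff (bideg a k) (∑ j ∈ range m, C (β j) * X 1 ^ j) = 0 := by
  refine (map_sum _ _ _).trans (sum_eq_zero fun j hj => ?_)
  rw [coeff_C_mul, coeff_X_pow, if_neg, mul_zero]
  intro h
  have := congrArg (· 1) h
  simp at this hj
  omega

lemma coeff_bideg_coe_eq_zero {P : MvPolynomial (Fin 2) R} {n : ℕ} (hn : P.totalDegree < n)
    (k : ℕ) : coeff (bideg n k) (P : MvPowerSeries (Fin 2) R) = 0 := by
  rw [MvPolynomial.coeff_coe]
  apply MvPolynomial.coeff_eq_zero_of_totalDegree_lt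
  rw [← Finsupp.degree_apply, degree_bideg]
  omega

theorem coeff_bideg_eq_of_mul_one_sub_X_eq (F : MvPowerSeries (Fin 2) R) {m₁ m₂ : ℕ} (c : R)
    (α β : ℕ → R) (P : MvPolynomial (Fin 2) R)
    (heq : (1 - X 0) * (1 - X 1) * F =
        C c * X 0 ^ m₁ * X 1 ^ m₂
      + (1 - X 0) * (∑ i ∈ range m₁, C (α i) * X 0 ^ i)
      + (1 - X 1) * (∑ j ∈ range m₂, C (β j) * X 1 ^ j)
      + (1 - X 0) * (1 - X 1) * (P : MvPowerSeries (Fin 2) R))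
    {n k : ℕ} (hn : m₁ ≤ n) (hk : m₂ ≤ k) (hP : P.totalDegree < n) :
    coeff (bideg n k) F = c := by
  simpa only [map_add, rectSum_one_sub_X_zero_mul_one_sub_X_one_mul, rectSum_one_sub_X_zero_mul,
    rectSum_one_sub_X_one_mul, rectSum_C_mul_X_pow_mul_X_pow hn hk,
    coeff_bideg_sum_C_mul_X_zero_pow hn, coeff_bideg_sum_C_mul_X_one_pow hk,
    coeff_bideg_coe_eq_zero hP, sum_const_zero, add_zero] using congrArg (rectSum n k) heq

end Coefficients

section Localization

variable {S M : Type*} [CommRing S] [AddCommGroup M] [Module S M]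

lemma exists_smul_mem_of_forall_exists [Module.Finite S M] {p : Submonoid S} {N : Submodule S M}
    (h : ∀ m, ∃ s ∈ p, s • m ∈ N) : ∃ s ∈ p, ∀ m, s • m ∈ N := by
  classical
  obtain ⟨G, hG⟩ := Module.Finite.fg_top (R := S) (M := M)
  choose s hsp hsN using h
  refine ⟨∏ g ∈ G, s g, prod_mem fun g _ => hsp g, fun m => ?_⟩
  have hle : Submodule.span S (G : Set M) ≤ N.comap (LinearMap.lsmul S M (∏ g ∈ G, s g)) := by
    refine Submodule.span_le.2 fun g hg => ?_
    rw [SetLike.mem_coe, Submodule.mem_comap, LinearMap.lsmul_apply, ← mul_prod_erase G s hg,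
      mul_comm, mul_smul]
    exact N.smul_mem _ (hsN g)
  exact hle (hG ▸ Submodule.mem_top)

lemma exists_smul_mem_of_span_eq_top {Sₚ Mₚ : Type*} [CommRing Sₚ] [Algebra S Sₚ]
    [AddCommGroup Mₚ] [Module S Mₚ] [Module Sₚ Mₚ] [IsScalarTower S Sₚ Mₚ] [Module.Finite S M]
    (p : Submonoid S) [IsLocalization p Sₚ] (f : M →ₗ[S] Mₚ) [IsLocalizedModule p f]
    {N : Submodule S M} (hN : Submodule.span Sₚ (f '' N) = ⊤) : ∃ s ∈ p, ∀ m, s • m ∈ N := by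
  refine exists_smul_mem_of_forall_exists fun m => ?_
  have hm : f m ∈ N.localized' Sₚ p f := by
    rw [Submodule.localized'_eq_span, hN]
    exact Submodule.mem_top
  obtain ⟨n, hn, s, hs⟩ := hm
  rw [IsLocalizedModule.mk'_eq_iff, Submonoid.smul_def, ← map_smul] at hs
  obtain ⟨u, hu⟩ := IsLocalizedModule.exists_of_eq (S := p) hs
  refine ⟨u * s, mul_mem u.2 s.2, ?_⟩
  rw [mul_smul, ← Submonoid.smul_def u, ← hu]
  exact N.smul_mem _ hn

variable [IsDomain S] [Module.Finite S M]

lemma exists_finset_subset_linearIndependent_card_eq_finrank {H : Set M}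
    (hH : Submodule.span S H = ⊤) :
    ∃ G : Finset M, ↑G ⊆ H ∧ LinearIndependent S ((↑) : G → M) ∧
      G.card = Module.finrank (FractionRing S) (TensorProduct S (FractionRing S) M) ∧
      ∃ s : S, s ≠ 0 ∧ ∀ m, s • m ∈ Submodule.span S (G : Set M) := by
  set Q := FractionRing S
  set ℓ := TensorProduct.mk S Q M 1
  obtain ⟨B, hBH, -, hBspan, hBli⟩ :=
    exists_linearIndepOn_extension (K := Q) (v := ℓ) (linearIndepOn_empty Q ℓ) (Set.empty_subset H)
  have hspan : Submodule.span Q (ℓ '' B) = ⊤ := by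
    refine eq_top_iff.2 (le_trans ?_ (Submodule.span_le.2 hBspan))
    rw [span_eq_top_of_isLocalizedModule Q (nonZeroDivisors S) ℓ hH]
  have : Finite B := hBli.finite
  obtain ⟨G, rfl⟩ := B.toFinite.exists_finset_coe
  refine ⟨G, hBH, (hBli.restrict_scalars' S).of_comp ℓ, ?_, ?_⟩
  · have hcard := finrank_span_eq_card hBli
    rw [← Set.image_eq_range, hspan, finrank_top] at hcard
    simp [Q, hcard]
  · have hN : Submodule.span Q (ℓ '' Submodule.span S (G : Set M)) = ⊤ :=
      eq_top_iff.2 (hspan ▸ Submodule.span_mono (Set.image_mono Submodule.subset_span))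
    obtain ⟨s, hs, hsG⟩ := exists_smul_mem_of_span_eq_top (nonZeroDivisors S) ℓ hN
    exact ⟨s, nonZeroDivisors.ne_zero hs, hsG⟩

end Localization

section Graded

variable {σ K M : Type*} [Field K] [AddCommGroup M] [Module K M]

section Projection

variable [DecidableEq σ] (ℳ : (σ →₀ ℕ) → Submodule K M) [DirectSum.Decomposition ℳ]

noncomputable def proj (d : σ →₀ ℕ) : M →ₗ[K] M :=
  (ℳ d).subtype ∘ₗ DirectSum.component K (σ →₀ ℕ) (fun i => ℳ i) d ∘ₗ
    (DirectSum.decomposeLinearEquiv ℳ).toLinearMap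

lemma proj_mem (d : σ →₀ ℕ) (m : M) : proj ℳ d m ∈ ℳ d := (DirectSum.decompose ℳ m d).2

lemma proj_of_mem {d : σ →₀ ℕ} {m : M} (h : m ∈ ℳ d) : proj ℳ d m = m :=
  DirectSum.decompose_of_mem_same ℳ h

lemma proj_of_mem_ne {d e : σ →₀ ℕ} {m : M} (h : m ∈ ℳ e) (hne : e ≠ d) : proj ℳ d m = 0 :=
  DirectSum.decompose_of_mem_ne ℳ h hne

end Projection

variable [Module (MvPolynomial σ K) M]

def IsMultigraded (ℳ : (σ →₀ ℕ) → Submodule K M) : Prop :=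
  ∀ (u v : σ →₀ ℕ) (c : K) (m : M), m ∈ ℳ v → MvPolynomial.monomial u c • m ∈ ℳ (u + v)

lemma monomial_smul_eq_smul_monomial_one_smul [IsScalarTower K (MvPolynomial σ K) M]
    (μ : σ →₀ ℕ) (c : K) (m : M) :
    MvPolynomial.monomial μ c • m = c • MvPolynomial.monomial μ (1 : K) • m := by
  rw [← smul_assoc, MvPolynomial.smul_monomial, smul_eq_mul, mul_one]

lemma card_le_finrank_of_linearIndependent [IsScalarTower K (MvPolynomial σ K) M]
    {ℳ : (σ →₀ ℕ) → Submodule K M} (hℳ : IsMultigraded ℳ) {d : σ →₀ ℕ} [FiniteDimensional K (ℳ d)] {G : Finset M}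
    {e : M → σ →₀ ℕ} (he : ∀ g ∈ G, g ∈ ℳ (e g))
    (hli : LinearIndependent (MvPolynomial σ K) ((↑) : G → M)) (hd : ∀ g ∈ G, e g ≤ d) :
    G.card ≤ Module.finrank K (ℳ d) := by
  let v : G → ℳ d := fun g => ⟨MvPolynomial.monomial (d - e g) (1 : K) • (g : M), by
    simpa [tsub_add_cancel_of_le (hd g g.2)] using hℳ (d - e g) (e g) 1 g (he g g.2)⟩
  have hv : LinearIndependent K v := by
    rw [Fintype.linearIndependent_iff]
    intro c hc g
    have h0 : ∑ g : G, MvPolynomial.monomial (d - e g) (c g) • (g : M) = 0 := by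
      simpa [v, ← monomial_smul_eq_smul_monomial_one_smul] using congrArg Subtype.val hc
    simpa using Fintype.linearIndependent_iff.1 hli _ h0 g
  simpa using hv.fintype_card_le_finrank

variable [DecidableEq σ] {ℳ : (σ →₀ ℕ) → Submodule K M} [DirectSum.Decomposition ℳ]

lemma span_homogeneous_of_forall_proj_mem {N : Submodule (MvPolynomial σ K) M}
    (hN : ∀ m ∈ N, ∀ d, proj ℳ d m ∈ N) :
    Submodule.span (MvPolynomial σ K) {m | m ∈ N ∧ ∃ d, m ∈ ℳ d} = N := by
  classical
  refine le_antisymm (Submodule.span_le.2 fun m hm => hm.1) fun m hm => ?_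
  rw [← DirectSum.sum_support_decompose ℳ m]
  exact Submodule.sum_mem _ fun d _ => Submodule.subset_span ⟨hN m hm d, d, proj_mem ℳ d m⟩

variable (ℳ) in
lemma span_homogeneous_eq_top :
    Submodule.span (MvPolynomial σ K) {m : M | ∃ d, m ∈ ℳ d} = ⊤ := by
  simpa using span_homogeneous_of_forall_proj_mem (ℳ := ℳ) (N := ⊤) (by simp)

lemma exists_finset_homogeneous_span_eq {N : Submodule (MvPolynomial σ K) M} (hfg : N.FG)
    (hN : ∀ m ∈ N, ∀ d, proj ℳ d m ∈ N) :
    ∃ G : Finset M, (∀ g ∈ G, ∃ d, g ∈ ℳ d) ∧ Submodule.span (MvPolynomial σ K) ↑G = N := by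
  rw [← span_homogeneous_of_forall_proj_mem hN, Submodule.fg_span_iff_fg_span_finset_subset] at hfg
  obtain ⟨G, hGsub, hG⟩ := hfg
  exact ⟨G, fun g hg => (hGsub hg).2, by rw [← hG, span_homogeneous_of_forall_proj_mem hN]⟩

variable (hℳ : IsMultigraded ℳ)
include hℳ

lemma proj_monomial_smul_of_le {ν e : σ →₀ ℕ} (h : ν ≤ e) (c : K) (m : M) :
    proj ℳ e (MvPolynomial.monomial ν c • m) = MvPolynomial.monomial ν c • proj ℳ (e - ν) m := by
  induction m using DirectSum.Decomposition.inductionOn ℳ with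
  | zero => simp
  | @homogeneous d m =>
    have hsm := hℳ ν d c m m.2
    by_cases hde : e = ν + d
    · subst hde
      rw [proj_of_mem ℳ hsm, add_tsub_cancel_left, proj_of_mem ℳ m.2]
    · have hne : d ≠ e - ν := fun hd => hde (by rw [hd, add_tsub_cancel_of_le h])
      rw [proj_of_mem_ne ℳ hsm (Ne.symm hde), proj_of_mem_ne ℳ m.2 hne, smul_zero]
  | add m m' ihm ihm' => rw [smul_add, map_add, map_add, ihm, ihm', smul_add]

lemma proj_monomial_smul_of_not_le {ν e : σ →₀ ℕ} (h : ¬ ν ≤ e) (c : K) (m : M) :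
    proj ℳ e (MvPolynomial.monomial ν c • m) = 0 := by
  induction m using DirectSum.Decomposition.inductionOn ℳ with
  | zero => simp
  | @homogeneous d m =>
    exact proj_of_mem_ne ℳ (hℳ ν d c m m.2) fun hc => h (hc ▸ le_self_add)
  | add m m' ihm ihm' => rw [smul_add, map_add, ihm, ihm', add_zero]

lemma proj_add_smul_of_mem {d : σ →₀ ℕ} {m : M} (hm : m ∈ ℳ d) (f : MvPolynomial σ K)
    (e : σ →₀ ℕ) : proj ℳ (e + d) (f • m) = MvPolynomial.monomial e (f.coeff e) • m := by
  have hterm : ∀ ν, proj ℳ (e + d) (MvPolynomial.monomial ν (f.coeff ν) • m) =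
      if ν = e then MvPolynomial.monomial e (f.coeff e) • m else 0 := by
    intro ν
    split_ifs with h
    · subst h
      exact proj_of_mem ℳ (hℳ _ _ _ _ hm)
    · exact proj_of_mem_ne ℳ (hℳ _ _ _ _ hm) (by simpa using h)
  conv_lhs => rw [f.as_sum, Finset.sum_smul, map_sum]
  simp only [hterm, Finset.sum_ite_eq']
  split_ifs with h
  · rfl
  · rw [MvPolynomial.notMem_support_iff.1 h, map_zero, zero_smul]

variable [IsScalarTower K (MvPolynomial σ K) M]

lemma proj_mem_span_monomial_smul {G : Set M} {e : M → σ →₀ ℕ} (he : ∀ g ∈ G, g ∈ ℳ (e g))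
    {y : M} (hy : y ∈ Submodule.span (MvPolynomial σ K) G) (d : σ →₀ ℕ) :
    proj ℳ d y ∈ Submodule.span K
      ((fun g => MvPolynomial.monomial (d - e g) (1 : K) • g) '' {g ∈ G | e g ≤ d}) := by
  induction hy using Submodule.span_induction generalizing d with
  | mem g hg =>
    by_cases hgd : e g = d
    · subst hgd
      refine Submodule.subset_span ⟨g, ⟨hg, le_rfl⟩, ?_⟩
      simp [proj_of_mem ℳ (he g hg)]
    · simp [proj_of_mem_ne ℳ (he g hg) hgd]
  | zero => simp
  | add y y' _ _ ihy ihy' => simpa using Submodule.add_mem _ (ihy d) (ihy' d)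
  | smul f y _ ih =>
    rw [f.as_sum, Finset.sum_smul, map_sum]
    refine Submodule.sum_mem _ fun ν _ => ?_
    by_cases hle : ν ≤ d
    · rw [proj_monomial_smul_of_le hℳ hle]
      refine Submodule.span_induction (p := fun x _ => MvPolynomial.monomial ν (f.coeff ν) • x ∈ _)
        ?_ (by simp) (fun x y _ _ hx hy => by simpa [smul_add] using Submodule.add_mem _ hx hy)
        (fun a x _ hx => by simpa [smul_comm _ a] using Submodule.smul_mem _ a hx) (ih (d - ν))
      rintro _ ⟨g, ⟨hg, hgd⟩, rfl⟩
      have hexp : ν + (d - ν - e g) = d - e g := by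
        ext i
        have := hle i
        have := hgd i
        simp only [Finsupp.coe_add, Finsupp.coe_tsub, Pi.add_apply, Pi.sub_apply] at *
        omega
      rw [smul_smul, MvPolynomial.monomial_mul, mul_one, hexp,
        monomial_smul_eq_smul_monomial_one_smul]
      exact Submodule.smul_mem _ _ (Submodule.subset_span ⟨g, ⟨hg, hgd.trans tsub_le_self⟩, rfl⟩)
    · rw [proj_monomial_smul_of_not_le hℳ hle]
      exact Submodule.zero_mem _

lemma proj_mem_span {G : Set M} {e : M → σ →₀ ℕ} (he : ∀ g ∈ G, g ∈ ℳ (e g))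
    {y : M} (hy : y ∈ Submodule.span (MvPolynomial σ K) G) (d : σ →₀ ℕ) :
    proj ℳ d y ∈ Submodule.span (MvPolynomial σ K) G := by
  refine (Submodule.span_le (p := (Submodule.span _ _).restrictScalars K)).2 ?_
    (proj_mem_span_monomial_smul hℳ he hy d)
  rintro _ ⟨g, ⟨hg, -⟩, rfl⟩
  exact Submodule.smul_mem _ _ (Submodule.subset_span hg)

lemma finiteDimensional_component [Module.Finite (MvPolynomial σ K) M] (d : σ →₀ ℕ) :
    FiniteDimensional K (ℳ d) := by
  obtain ⟨G, hGhom, hG⟩ := exists_finset_homogeneous_span_eq (ℳ := ℳ) Module.Finite.fg_top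
    (by simp)
  choose! e he using hGhom
  set A := (fun g => MvPolynomial.monomial (d - e g) (1 : K) • g) '' {g ∈ (G : Set M) | e g ≤ d}
  have hA : A.Finite := (G.finite_toSet.subset (Set.sep_subset _ _)).image _
  have := FiniteDimensional.span_of_finite K hA
  have hle : ℳ d ≤ Submodule.span K A := fun m hm =>
    proj_of_mem ℳ hm ▸ proj_mem_span_monomial_smul hℳ he (hG ▸ Submodule.mem_top) d
  exact Submodule.finiteDimensional_of_le hle

lemma exists_monomial_smul_mem {G : Set M} {e : M → σ →₀ ℕ} (he : ∀ g ∈ G, g ∈ ℳ (e g))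
    {s : MvPolynomial σ K} (hs : s ≠ 0) (hsG : ∀ m, s • m ∈ Submodule.span (MvPolynomial σ K) G) :
    ∃ w : σ →₀ ℕ, ∀ d, ∀ m ∈ ℳ d, MvPolynomial.monomial w (1 : K) • m ∈
      Submodule.span (MvPolynomial σ K) G := by
  obtain ⟨w, hw⟩ := MvPolynomial.support_nonempty.2 hs
  refine ⟨w, fun d m hm => ?_⟩
  have h := proj_mem_span hℳ he (hsG m) (w + d)
  rw [proj_add_smul_of_mem hℳ hm, monomial_smul_eq_smul_monomial_one_smul] at h
  exact (((Submodule.span _ G).restrictScalars K).smul_mem_iff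
    (MvPolynomial.mem_support_iff.1 hw)).1 h

lemma exists_forall_le_eq_zero_of_monomial_smul_eq_zero [IsNoetherian (MvPolynomial σ K) M]
    (w : σ →₀ ℕ) : ∃ E, ∀ d, E ≤ d → ∀ m ∈ ℳ d, MvPolynomial.monomial w (1 : K) • m = 0 → m = 0 := by
  set T := LinearMap.ker (LinearMap.lsmul (MvPolynomial σ K) M (MvPolynomial.monomial w 1))
  have hT : ∀ m ∈ T, ∀ d, proj ℳ d m ∈ T := by
    intro m hm d
    have h := proj_monomial_smul_of_le hℳ (le_self_add (a := w) (b := d)) 1 m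
    rw [LinearMap.mem_ker, LinearMap.lsmul_apply] at hm ⊢
    rwa [hm, map_zero, add_tsub_cancel_left, eq_comm] at h
  obtain ⟨G, hGhom, hG⟩ := exists_finset_homogeneous_span_eq (IsNoetherian.noetherian T) hT
  choose! e he using hGhom
  refine ⟨G.sup fun g => e g + w, fun d hd m hm hwm => ?_⟩
  have hmT : m ∈ Submodule.span (MvPolynomial σ K) (G : Set M) := hG ▸ hwm
  have h := proj_mem_span_monomial_smul hℳ he hmT d
  rw [proj_of_mem ℳ hm] at h
  refine (Submodule.mem_bot K).1 (Submodule.span_le.2 ?_ h)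
  rintro _ ⟨g, ⟨hg, -⟩, rfl⟩
  have hgT : MvPolynomial.monomial w (1 : K) • g = 0 := by
    simpa [T] using hG.le (Submodule.subset_span hg)
  have hw : w ≤ d - e g :=
    le_tsub_of_add_le_left ((Finset.le_sup (f := fun g => e g + w) hg).trans hd)
  show MvPolynomial.monomial (d - e g) (1 : K) • g ∈ (⊥ : Submodule K M)
  rw [← tsub_add_cancel_of_le hw, ← mul_one (1 : K), ← MvPolynomial.monomial_mul, mul_smul, hgT,
    smul_zero]
  exact Submodule.zero_mem _

lemma finrank_le_card_of_monomial_smul_mem {G : Finset M} {e : M → σ →₀ ℕ}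
    (he : ∀ g ∈ G, g ∈ ℳ (e g)) {w d : σ →₀ ℕ}
    (hinj : ∀ m ∈ ℳ d, MvPolynomial.monomial w (1 : K) • m = 0 → m = 0)
    (hmem : ∀ m ∈ ℳ d, MvPolynomial.monomial w (1 : K) • m ∈
      Submodule.span (MvPolynomial σ K) (G : Set M)) :
    Module.finrank K (ℳ d) ≤ G.card := by
  set W := Submodule.span K
    (Set.range fun g : G => MvPolynomial.monomial (w + d - e g) (1 : K) • (g : M))
  have hW : ∀ m : ℳ d, MvPolynomial.monomial w (1 : K) • (m : M) ∈ W := by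
    intro m
    have h := proj_mem_span_monomial_smul hℳ he (hmem m m.2) (w + d)
    rw [proj_of_mem ℳ (hℳ w d 1 m m.2)] at h
    refine Submodule.span_mono ?_ h
    rintro _ ⟨g, ⟨hg, -⟩, rfl⟩
    exact ⟨⟨g, hg⟩, rfl⟩
  let φ : ℳ d →ₗ[K] W := LinearMap.codRestrict W
    ((LinearMap.lsmul (MvPolynomial σ K) M (MvPolynomial.monomial w 1)).restrictScalars K ∘ₗ
      (ℳ d).subtype) hW
  have hφ : Function.Injective φ := (injective_iff_map_eq_zero φ).2 fun m hm =>
    Subtype.ext (hinj m m.2 (congrArg Subtype.val hm))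
  have := FiniteDimensional.span_of_finite K (Set.finite_range
    fun g : G => MvPolynomial.monomial (w + d - e g) (1 : K) • (g : M))
  calc Module.finrank K (ℳ d) ≤ Module.finrank K W := LinearMap.finrank_le_finrank_of_injective hφ
    _ ≤ Fintype.card G := finrank_range_le_card _
    _ = G.card := Fintype.card_coe G

theorem exists_finrank_component_eq_of_le [Finite σ] [Module.Finite (MvPolynomial σ K) M] :
    ∃ D : σ →₀ ℕ, ∀ d, D ≤ d → Module.finrank K (ℳ d) =
      Module.finrank (FractionRing (MvPolynomial σ K))
        (TensorProduct (MvPolynomial σ K) (FractionRing (MvPolynomial σ K)) M) := by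
  obtain ⟨G, hGhom, hli, hcard, s, hs, hsG⟩ :=
    exists_finset_subset_linearIndependent_card_eq_finrank (span_homogeneous_eq_top ℳ)
  choose! e he using fun g (hg : g ∈ G) => hGhom hg
  obtain ⟨w, hw⟩ := exists_monomial_smul_mem hℳ he hs hsG
  obtain ⟨E, hE⟩ := exists_forall_le_eq_zero_of_monomial_smul_eq_zero hℳ w
  refine ⟨E ⊔ G.sup e, fun d hd => ?_⟩
  have := finiteDimensional_component hℳ d
  rw [← hcard]
  exact le_antisymm
    (finrank_le_card_of_monomial_smul_mem hℳ he (hE d (le_sup_left.trans hd)) (hw d))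
    (card_le_finrank_of_linearIndependent hℳ he hli fun g hg =>
      (Finset.le_sup hg).trans (le_sup_right.trans hd))

end Graded

end HilbertSeriesRank

theorem statement5 (K : Type) [Field K]
    (M : Type) [AddCommGroup M] [Module (MvPolynomial (Fin 2) K) M]
    [Module K M] [IsScalarTower K (MvPolynomial (Fin 2) K) M]
    [Module.Finite (MvPolynomial (Fin 2) K) M]
    (ℳ : (Fin 2 →₀ ℕ) → Submodule K M)
    (hM : DirectSum.IsInternal ℳ)
    (hMgr : ∀ (u v : Fin 2 →₀ ℕ) (c : K) (m : M), m ∈ ℳ v →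
      (MvPolynomial.monomial u c) • m ∈ ℳ (u + v))
    -- `HS` is the multigraded Hilbert series of `M`
    (HS : MvPowerSeries (Fin 2) ℤ)
    (hHS : ∀ u : Fin 2 →₀ ℕ, MvPowerSeries.coeff (R := ℤ) u HS = (Module.finrank K (ℳ u) : ℤ))
    (m₁ m₂ : ℕ) (c : ℤ) (α β : ℕ → ℤ) (R : MvPolynomial (Fin 2) ℤ)
    (heq : (1 - MvPowerSeries.X 0) * (1 - MvPowerSeries.X 1) * HS =
        MvPowerSeries.C (σ := Fin 2) (R := ℤ) c * (MvPowerSeries.X 0) ^ m₁ * (MvPowerSeries.X 1) ^ m₂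
      + (1 - MvPowerSeries.X 0) *
          (∑ i ∈ Finset.range m₁, MvPowerSeries.C (σ := Fin 2) (R := ℤ) (α i) * (MvPowerSeries.X 0) ^ i)
      + (1 - MvPowerSeries.X 1) *
          (∑ j ∈ Finset.range m₂, MvPowerSeries.C (σ := Fin 2) (R := ℤ) (β j) * (MvPowerSeries.X 1) ^ j)
      + (1 - MvPowerSeries.X 0) * (1 - MvPowerSeries.X 1) * (R : MvPowerSeries (Fin 2) ℤ)) :
    c = (rk (MvPolynomial (Fin 2) K) M : ℤ) := by
  let := hM.chooseDecomposition
  obtain ⟨D, hD⟩ := HilbertSeriesRank.exists_finrank_component_eq_of_le hMgr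
  set n := m₁ + m₂ + R.totalDegree + D 0 + D 1 + 1
  have hDn : D ≤ HilbertSeriesRank.bideg n n := fun i => by fin_cases i <;> simp <;> omega
  calc c = MvPowerSeries.coeff (HilbertSeriesRank.bideg n n) HS :=
        (HilbertSeriesRank.coeff_bideg_eq_of_mul_one_sub_X_eq HS c α β R heq
          (by omega) (by omega) (by omega)).symm
    _ = Module.finrank K (ℳ (HilbertSeriesRank.bideg n n)) := hHS _
    _ = rk (MvPolynomial (Fin 2) K) M := by rw [hD _ hDn]; rfl
end

section
/- Let M be a finitely generated ℕ-graded module over S = K[x_1,…,x_r], where S carries the standard grading in which each variable x_i has degree 1. Then there exists a polynomial HP(M,u) of degree at most r−1 in the variable u (with rational coefficients) such that HP(M,u) = HF(M,u) for all sufficiently large natural numbers u. -/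
open Polynomial Finset DirectSum Module

/-! ### Numerical lemmas: polynomial summation -/

lemma sum_pow_poly (p : ℕ) : ∃ B : Polynomial ℚ, B.degree ≤ (p + 1 : ℕ) ∧
    ∀ n : ℕ, B.eval (n : ℚ) = ∑ v ∈ range n, (v : ℚ) ^ p := by
  refine ⟨∑ i ∈ range (p + 1),
      C (_root_.bernoulli i * ((p + 1).choose i) / (p + 1)) * X ^ (p + 1 - i), ?_, ?_⟩
  · refine (Polynomial.degree_sum_le _ _).trans ?_
    refine Finset.sup_le fun i _ => ?_
    refine (degree_mul_le _ _).trans ?_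
    have h1 : (C (_root_.bernoulli i * ((p + 1).choose i) / (p + 1))).degree ≤ 0 := degree_C_le
    have h2 : (X ^ (p + 1 - i) : ℚ[X]).degree ≤ (p + 1 : ℕ) :=
      (degree_X_pow_le _).trans (by exact_mod_cast WithBot.coe_le_coe.2 (Nat.sub_le _ _))
    calc _ ≤ 0 + ((p+1 : ℕ) : WithBot ℕ) := add_le_add h1 h2
    _ = _ := by simp
  · intro n
    rw [sum_range_pow n p]
    rw [eval_finset_sum]
    refine Finset.sum_congr rfl fun i _ => ?_
    simp only [eval_mul, eval_C, eval_pow, eval_X]; ring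

lemma sum_poly (d : ℕ) (Q : Polynomial ℚ) (hQ : Q.degree < d) :
    ∃ P : Polynomial ℚ, P.degree < ((d + 1 : ℕ) : WithBot ℕ) ∧
      ∀ n : ℕ, P.eval (n : ℚ) = ∑ v ∈ range n, Q.eval (v : ℚ) := by
  choose B hBdeg hBeval using sum_pow_poly
  refine ⟨∑ p ∈ range (Q.natDegree + 1), C (Q.coeff p) * B p, ?_, ?_⟩
  · refine lt_of_le_of_lt (Polynomial.degree_sum_le _ _) ?_
    refine Finset.sup_lt_iff (by exact_mod_cast WithBot.bot_lt_coe _) |>.2 fun p hp => ?_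
    by_cases hc : Q.coeff p = 0
    · simp [hc]
    · have hple : (p : WithBot ℕ) ≤ Q.degree := le_degree_of_ne_zero hc
      have : (p : WithBot ℕ) < d := lt_of_le_of_lt hple hQ
      have hpd : p < d := by exact_mod_cast this
      refine lt_of_le_of_lt (degree_mul_le _ _) ?_
      calc (C (Q.coeff p)).degree + (B p).degree ≤ 0 + ((p + 1 : ℕ) : WithBot ℕ) :=
            add_le_add degree_C_le (hBdeg p)
      _ = ((p + 1 : ℕ) : WithBot ℕ) := by simp
      _ < ((d + 1 : ℕ) : WithBot ℕ) := by exact_mod_cast Nat.succ_lt_succ hpd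
  · intro n
    rw [eval_finset_sum]
    simp only [eval_mul, eval_C, hBeval]
    simp_rw [Finset.mul_sum]
    rw [Finset.sum_comm]
    refine Finset.sum_congr rfl fun v _ => ?_
    rw [Polynomial.eval_eq_sum_range]

/-! ### Projections attached to an internal grading -/

section Proj
variable {K M : Type} [Field K] [AddCommGroup M] [Module K M]
  (ℳ : ℕ → Submodule K M) [DirectSum.Decomposition ℳ]

noncomputable def proj (u : ℕ) : M →ₗ[K] M :=
  (ℳ u).subtype ∘ₗ (DFinsupp.lapply u) ∘ₗ (DirectSum.decomposeLinearEquiv ℳ).toLinearMap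

lemma proj_apply (u : ℕ) (m : M) : proj ℳ u m = (DirectSum.decompose ℳ m u : M) := rfl

lemma proj_mem (u : ℕ) (m : M) : proj ℳ u m ∈ ℳ u := (DirectSum.decompose ℳ m u).2

lemma proj_of_mem_same {u : ℕ} {m : M} (h : m ∈ ℳ u) : proj ℳ u m = m :=
  DirectSum.decompose_of_mem_same ℳ h

lemma proj_of_mem_ne {u v : ℕ} {m : M} (h : m ∈ ℳ v) (huv : v ≠ u) : proj ℳ u m = 0 :=
  DirectSum.decompose_of_mem_ne ℳ h huv

lemma proj_eq_zero_of_mem_iSup {u : ℕ} {p : ℕ → Prop} (hp : ∀ v, p v → v ≠ u)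
    {m : M} (hm : m ∈ ⨆ v, ⨆ _ : p v, ℳ v) : proj ℳ u m = 0 := by
  have : (⨆ v, ⨆ _ : p v, ℳ v) ≤ LinearMap.ker (proj ℳ u) := by
    refine iSup_le fun v => iSup_le fun hv => fun m hm => ?_
    exact proj_of_mem_ne ℳ hm (hp v hv)
  exact this hm

lemma sum_proj (m : M) : ∃ s : Finset ℕ, (∀ u ∉ s, proj ℳ u m = 0) ∧
    m = ∑ u ∈ s, proj ℳ u m := by
  classical
  refine ⟨(DirectSum.decompose ℳ m).support, fun u hu => ?_, ?_⟩
  · rw [proj_apply]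
    rw [DFinsupp.notMem_support_iff] at hu
    simp [hu]
  · simp only [proj_apply]
    exact (DirectSum.sum_support_decompose ℳ m).symm

variable {r : ℕ} [Module (MvPolynomial (Fin r) K) M]

lemma proj_smul_add
    (hMgr : ∀ (j v : ℕ) (p : MvPolynomial (Fin r) K), p.IsHomogeneous j →
      ∀ m ∈ ℳ v, p • m ∈ ℳ (j + v))
    {j : ℕ} {p : MvPolynomial (Fin r) K} (hp : p.IsHomogeneous j) (m : M) (u : ℕ) :
    proj ℳ (j + u) (p • m) = p • proj ℳ u m := by
  obtain ⟨s, hs0, hsum⟩ := sum_proj ℳ m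
  conv_lhs => rw [hsum]
  rw [Finset.smul_sum, map_sum]
  have key : ∀ v ∈ s, proj ℳ (j + u) (p • proj ℳ v m)
      = if v = u then p • proj ℳ v m else 0 := by
    intro v _
    by_cases hv : v = u
    · subst hv; rw [if_pos rfl]
      exact proj_of_mem_same ℳ (hMgr j v p hp _ (proj_mem ℳ v m))
    · rw [if_neg hv]
      exact proj_of_mem_ne ℳ (hMgr j v p hp _ (proj_mem ℳ v m)) (by omega)
  rw [Finset.sum_congr rfl key, Finset.sum_ite_eq' s u (fun v => p • proj ℳ v m)]
  by_cases hu : u ∈ s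
  · rw [if_pos hu]
  · rw [if_neg hu, hs0 u hu, smul_zero]

lemma proj_smul_lt
    (hMgr : ∀ (j v : ℕ) (p : MvPolynomial (Fin r) K), p.IsHomogeneous j →
      ∀ m ∈ ℳ v, p • m ∈ ℳ (j + v))
    {j : ℕ} {p : MvPolynomial (Fin r) K} (hp : p.IsHomogeneous j) (m : M) {w : ℕ}
    (hw : w < j) : proj ℳ w (p • m) = 0 := by
  obtain ⟨s, hs0, hsum⟩ := sum_proj ℳ m
  rw [hsum, Finset.smul_sum, map_sum]
  refine Finset.sum_eq_zero fun v _ => ?_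
  exact proj_of_mem_ne ℳ (hMgr j v p hp _ (proj_mem ℳ v m)) (by omega)

end Proj

/-! ### Splitting off one variable -/

lemma poly_decomp {K : Type} [Field K] {r : ℕ} (p : MvPolynomial (Fin (r+1)) K) :
    ∃ (q : MvPolynomial (Fin r) K) (t : MvPolynomial (Fin (r+1)) K),
      p = MvPolynomial.rename Fin.succ q + MvPolynomial.X 0 * t := by
  induction p using MvPolynomial.induction_on with
  | C a => exact ⟨MvPolynomial.C a, 0, by simp⟩
  | add p1 p2 ih1 ih2 =>
    obtain ⟨q1, t1, rfl⟩ := ih1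
    obtain ⟨q2, t2, rfl⟩ := ih2
    exact ⟨q1 + q2, t1 + t2, by rw [map_add]; ring⟩
  | mul_X p i ih =>
    obtain ⟨q, t, rfl⟩ := ih
    refine Fin.cases ?_ (fun j => ?_) i
    · exact ⟨0, MvPolynomial.rename Fin.succ q + MvPolynomial.X 0 * t, by rw [map_zero]; ring⟩
    · refine ⟨q * MvPolynomial.X j, t * MvPolynomial.X j.succ, ?_⟩
      rw [map_mul, MvPolynomial.rename_X]; ring

lemma module_finite_transfer {K : Type} [Field K] {r : ℕ}
    {W : Type} [AddCommGroup W]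
    [Module (MvPolynomial (Fin (r+1)) K) W] [Module (MvPolynomial (Fin r) K) W]
    (hcomp : ∀ (q : MvPolynomial (Fin r) K) (w : W),
        q • w = (MvPolynomial.rename Fin.succ q) • w)
    (hx : ∀ w : W, (MvPolynomial.X 0 : MvPolynomial (Fin (r+1)) K) • w = 0)
    [Module.Finite (MvPolynomial (Fin (r+1)) K) W] :
    Module.Finite (MvPolynomial (Fin r) K) W := by
  obtain ⟨n, g, hg⟩ := Module.Finite.exists_fin (R := MvPolynomial (Fin (r+1)) K) (M := W)
  refine ⟨Submodule.fg_def.mpr ⟨Set.range g, Set.finite_range g, ?_⟩⟩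
  rw [eq_top_iff]
  intro w _
  have hw : w ∈ Submodule.span (MvPolynomial (Fin (r+1)) K) (Set.range g) := by
    rw [hg]; trivial
  refine Submodule.span_induction ?_ ?_ ?_ ?_ hw
  · exact fun y hy => Submodule.subset_span hy
  · exact Submodule.zero_mem _
  · exact fun a b _ _ ha hb => Submodule.add_mem _ ha hb
  · intro p w _ hmem
    obtain ⟨q, t, rfl⟩ := poly_decomp p
    rw [add_smul, mul_smul, hx (t • w), add_zero, ← hcomp]
    exact Submodule.smul_mem _ q hmem

/-! ### The main induction -/

set_option maxHeartbeats 1000000 in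
set_option synthInstance.maxHeartbeats 400000 in
theorem hilb_aux (r : ℕ) : ∀ (K : Type) [Field K] (M : Type) [AddCommGroup M]
    [Module (MvPolynomial (Fin r) K) M] [Module K M]
    [IsScalarTower K (MvPolynomial (Fin r) K) M]
    [Module.Finite (MvPolynomial (Fin r) K) M]
    (ℳ : ℕ → Submodule K M), DirectSum.IsInternal ℳ →
    (∀ (j v : ℕ) (p : MvPolynomial (Fin r) K), p.IsHomogeneous j →
      ∀ m ∈ ℳ v, p • m ∈ ℳ (j + v)) →
    (∀ u, FiniteDimensional K (ℳ u)) ∧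
    ∃ P : Polynomial ℚ, P.degree < (r : WithBot ℕ) ∧
      ∃ N : ℕ, ∀ u : ℕ, N ≤ u → P.eval (u : ℚ) = (Module.finrank K (ℳ u) : ℚ) := by
  induction r with
  | zero =>
    intro K _ M _ _ _ _ _ ℳ hM hMgr
    haveI : Module.Finite K (MvPolynomial (Fin 0) K) :=
      Module.Finite.equiv (MvPolynomial.isEmptyAlgEquiv K (Fin 0)).symm.toLinearEquiv
    haveI : Module.Finite K M := Module.Finite.trans (MvPolynomial (Fin 0) K) M
    refine ⟨fun u => inferInstance, 0, ?_, ?_⟩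
    · simpa using WithBot.bot_lt_coe 0
    · have hindep : iSupIndep ℳ := hM.submodule_iSupIndep
      haveI := hindep.fintypeNeBotOfFiniteDimensional
      have hfin' : Finite {u : ℕ // ℳ u ≠ ⊥} := Finite.of_fintype _
      have hfin : {u : ℕ | ℳ u ≠ ⊥}.Finite := Set.finite_coe_iff.mp hfin'
      obtain ⟨N₀, hN₀⟩ := hfin.bddAbove
      refine ⟨N₀ + 1, fun u hu => ?_⟩
      have hbot : ℳ u = ⊥ := by
        by_contra hne
        exact absurd (hN₀ hne) (by omega)
      rw [hbot]
      simp [finrank_bot]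
  | succ r IH =>
    intro K _ M _ _ _ _ _ ℳ hM hMgr
    letI hdec : DirectSum.Decomposition ℳ := hM.chooseDecomposition
    have hx1 : (MvPolynomial.X 0 : MvPolynomial (Fin (r+1)) K).IsHomogeneous 1 :=
      MvPolynomial.isHomogeneous_X _ _
    have hxm : ∀ (v : ℕ) (m : M), m ∈ ℳ v →
        (MvPolynomial.X 0 : MvPolynomial (Fin (r+1)) K) • m ∈ ℳ (v+1) := by
      intro v m hm
      have := hMgr 1 v _ hx1 m hm
      rwa [Nat.add_comm] at this
    have hshift : ∀ (m : M) (u : ℕ),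
        proj ℳ (u+1) ((MvPolynomial.X 0 : MvPolynomial (Fin (r+1)) K) • m)
          = (MvPolynomial.X 0 : MvPolynomial (Fin (r+1)) K) • proj ℳ u m := by
      intro m u
      have := proj_smul_add ℳ hMgr hx1 m u
      rwa [Nat.add_comm 1 u] at this
    have hzero : ∀ (m : M),
        proj ℳ 0 ((MvPolynomial.X 0 : MvPolynomial (Fin (r+1)) K) • m) = 0 :=
      fun m => proj_smul_lt ℳ hMgr hx1 m (by omega)
    set φ : M →ₗ[MvPolynomial (Fin (r+1)) K] M :=
      LinearMap.lsmul (MvPolynomial (Fin (r+1)) K) M (MvPolynomial.X 0) with hφdef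
    set NN : Submodule (MvPolynomial (Fin (r+1)) K) M := LinearMap.ker φ with hNNdef
    set RR : Submodule (MvPolynomial (Fin (r+1)) K) M := LinearMap.range φ with hRRdef
    have hmemN : ∀ m : M, m ∈ NN ↔
        (MvPolynomial.X 0 : MvPolynomial (Fin (r+1)) K) • m = 0 := fun m => by
      simp [hNNdef, LinearMap.mem_ker, hφdef]
    have hmemR : ∀ m : M, m ∈ RR ↔
        ∃ t : M, (MvPolynomial.X 0 : MvPolynomial (Fin (r+1)) K) • t = m := fun m => by
      simp [hRRdef, LinearMap.mem_range, hφdef]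
    haveI : IsNoetherian (MvPolynomial (Fin (r+1)) K) M :=
      isNoetherian_of_isNoetherianRing_of_finite _ _
    haveI : Module.Finite (MvPolynomial (Fin (r+1)) K) ↥NN := ⟨IsNoetherian.noetherian ⊤⟩
    letI iN : Module (MvPolynomial (Fin r) K) ↥NN :=
      Module.compHom _ ((MvPolynomial.rename (Fin.succ : Fin r → Fin (r+1))
        : MvPolynomial (Fin r) K →ₐ[K] MvPolynomial (Fin (r+1)) K)).toRingHom
    have hcompN : ∀ (q : MvPolynomial (Fin r) K) (n : ↥NN),
        q • n = (MvPolynomial.rename Fin.succ q) • n := fun _ _ => rfl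
    letI : IsScalarTower K (MvPolynomial (Fin r) K) ↥NN :=
      ⟨fun a q n => by rw [hcompN, map_smul, smul_assoc, ← hcompN]⟩
    have hxN : ∀ n : ↥NN,
        (MvPolynomial.X 0 : MvPolynomial (Fin (r+1)) K) • n = 0 := by
      intro n
      apply Subtype.ext
      have h2 := (hmemN (n : M)).mp n.2
      simpa using h2
    haveI finN : Module.Finite (MvPolynomial (Fin r) K) ↥NN :=
      module_finite_transfer hcompN hxN
    haveI : Module.Finite (MvPolynomial (Fin (r+1)) K) (M ⧸ RR) :=
      Module.Finite.quotient _ _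
    letI iQ : Module (MvPolynomial (Fin r) K) (M ⧸ RR) :=
      Module.compHom _ ((MvPolynomial.rename (Fin.succ : Fin r → Fin (r+1))
        : MvPolynomial (Fin r) K →ₐ[K] MvPolynomial (Fin (r+1)) K)).toRingHom
    have hcompQ : ∀ (q : MvPolynomial (Fin r) K) (z : M ⧸ RR),
        q • z = (MvPolynomial.rename Fin.succ q) • z := fun _ _ => rfl
    letI : IsScalarTower K (MvPolynomial (Fin r) K) (M ⧸ RR) :=
      ⟨fun a q z => by rw [hcompQ, map_smul, smul_assoc, ← hcompQ]⟩
    have hxQ : ∀ z : M ⧸ RR,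
        (MvPolynomial.X 0 : MvPolynomial (Fin (r+1)) K) • z = 0 := by
      intro z
      obtain ⟨m, rfl⟩ := Submodule.Quotient.mk_surjective RR z
      rw [← Submodule.Quotient.mk_smul, Submodule.Quotient.mk_eq_zero]
      exact (hmemR _).mpr ⟨m, rfl⟩
    haveI finQ : Module.Finite (MvPolynomial (Fin r) K) (M ⧸ RR) :=
      module_finite_transfer hcompQ hxQ
    set π' : M →ₗ[K] M ⧸ RR := (RR.mkQ).restrictScalars K with hπdef
    have hπmk : ∀ m : M, π' m = Submodule.Quotient.mk m := fun _ => rfl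
    set 𝒩 : ℕ → Submodule K ↥NN :=
      fun u => (ℳ u).comap ((NN.subtype).restrictScalars K) with h𝒩def
    set 𝒬 : ℕ → Submodule K (M ⧸ RR) := fun u => (ℳ u).map π' with h𝒬def
    have hmem𝒩 : ∀ (u : ℕ) (n : ↥NN), n ∈ 𝒩 u ↔ (n : M) ∈ ℳ u := fun _ _ => Iff.rfl
    have hNproj : ∀ (n : M), n ∈ NN → ∀ u, proj ℳ u n ∈ NN := by
      intro n hn u
      rw [hmemN]
      have h1 := hshift n u
      rw [(hmemN n).mp hn, map_zero] at h1
      exact h1.symm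
    have hint𝒩 : DirectSum.IsInternal 𝒩 := by
      rw [DirectSum.isInternal_submodule_iff_iSupIndep_and_iSup_eq_top]
      constructor
      · intro u
        rw [disjoint_iff_inf_le]
        rintro n ⟨hn1, hn2⟩
        have hcoe : (n : M) ∈ ⨆ v, ⨆ _ : v ≠ u, ℳ v := by
          have hle : Submodule.map ((NN.subtype).restrictScalars K)
              (⨆ v, ⨆ _ : v ≠ u, 𝒩 v) ≤ ⨆ v, ⨆ _ : v ≠ u, ℳ v := by
            rw [Submodule.map_iSup]
            refine iSup_mono fun v => ?_
            rw [Submodule.map_iSup]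
            exact iSup_mono fun hv => Submodule.map_comap_le _ _
          exact hle (Submodule.mem_map_of_mem hn2)
        have h0 : proj ℳ u (n : M) = 0 :=
          proj_eq_zero_of_mem_iSup ℳ (fun v hv => hv) hcoe
        have h1 : proj ℳ u (n : M) = (n : M) := proj_of_mem_same ℳ hn1
        rw [Submodule.mem_bot]
        exact Subtype.ext (by rw [← h1, h0]; rfl)
      · rw [eq_top_iff]
        intro n _
        obtain ⟨s, hs0, hsum⟩ := sum_proj ℳ (n : M)
        have heq : n = ∑ v ∈ s, (⟨proj ℳ v (n : M), hNproj _ n.2 v⟩ : ↥NN) := by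
          apply Subtype.ext
          rw [AddSubmonoidClass.coe_finset_sum]
          exact hsum
        rw [heq]
        refine Submodule.sum_mem _ fun v hv => ?_
        exact Submodule.mem_iSup_of_mem v ((hmem𝒩 v _).mpr (proj_mem ℳ v (n : M)))
    have hgr𝒩 : ∀ (j v : ℕ) (p : MvPolynomial (Fin r) K), p.IsHomogeneous j →
        ∀ n ∈ 𝒩 v, p • n ∈ 𝒩 (j + v) := by
      intro j v p hp n hn
      rw [hmem𝒩] at hn ⊢
      have hcoe : ((p • n : ↥NN) : M) = (MvPolynomial.rename Fin.succ p) • (n : M) := by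
        rw [hcompN]; rfl
      rw [hcoe]
      exact hMgr j v _ hp.rename_isHomogeneous _ hn
    have hsup𝒬 : ⨆ u, 𝒬 u = ⊤ := by
      have h1 : ⨆ u, 𝒬 u = Submodule.map π' (⨆ u, ℳ u) := (Submodule.map_iSup _ _).symm
      rw [h1, hM.submodule_iSup_eq_top, Submodule.map_top]
      rw [LinearMap.range_eq_top]
      exact fun z => (Submodule.Quotient.mk_surjective RR z).imp fun m hm => hm
    have hint𝒬 : DirectSum.IsInternal 𝒬 := by
      rw [DirectSum.isInternal_submodule_iff_iSupIndep_and_iSup_eq_top]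
      refine ⟨?_, hsup𝒬⟩
      intro u
      rw [disjoint_iff_inf_le]
      rintro z ⟨hz1, hz2⟩
      obtain ⟨m, hm, rfl⟩ := hz1
      have hle : (⨆ v, ⨆ _ : v ≠ u, 𝒬 v) ≤
          Submodule.map π' (⨆ v, ⨆ _ : v ≠ u, ℳ v) := by
        rw [Submodule.map_iSup]
        refine iSup_mono fun v => ?_
        rw [Submodule.map_iSup]
      obtain ⟨m', hm', hmm'⟩ := hle hz2
      have hdiff : m - m' ∈ RR := by
        have h2 : π' (m - m') = 0 := by rw [map_sub, hmm', sub_self]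
        rw [hπmk] at h2
        exact (Submodule.Quotient.mk_eq_zero _).mp h2
      obtain ⟨t, ht⟩ := (hmemR _).mp hdiff
      have hproj0 : proj ℳ u m' = 0 :=
        proj_eq_zero_of_mem_iSup ℳ (fun v hv => hv) hm'
      have hm_eq : m = proj ℳ u (m - m') + proj ℳ u m' := by
        rw [← map_add, sub_add_cancel]
        exact (proj_of_mem_same ℳ hm).symm
      have hmemRm : m ∈ RR := by
        rw [hm_eq, hproj0, add_zero, ← ht]
        cases u with
        | zero => rw [hzero]; exact RR.zero_mem
        | succ w => rw [hshift]; exact (hmemR _).mpr ⟨proj ℳ w t, rfl⟩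
      rw [Submodule.mem_bot, hπmk, Submodule.Quotient.mk_eq_zero]
      exact hmemRm
    have hgr𝒬 : ∀ (j v : ℕ) (p : MvPolynomial (Fin r) K), p.IsHomogeneous j →
        ∀ z ∈ 𝒬 v, p • z ∈ 𝒬 (j + v) := by
      intro j v p hp z hz
      obtain ⟨m, hm, rfl⟩ := hz
      have h4 : p • π' m = π' ((MvPolynomial.rename Fin.succ p) • m) := by
        rw [hcompQ, hπmk, hπmk, Submodule.Quotient.mk_smul]
      rw [h4]
      exact Submodule.mem_map_of_mem (hMgr j v _ hp.rename_isHomogeneous _ hm)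
    obtain ⟨hfdN, PN, hPNdeg, N1, hPN⟩ := IH K ↥NN 𝒩 hint𝒩 hgr𝒩
    obtain ⟨hfdQ, PQ, hPQdeg, N2, hPQ⟩ := IH K (M ⧸ RR) 𝒬 hint𝒬 hgr𝒬
    have hψmem : ∀ (u : ℕ) (m : ↥(ℳ u)),
        ((φ.restrictScalars K) ∘ₗ (ℳ u).subtype) m ∈ ℳ (u+1) := by
      intro u m
      simpa [hφdef] using hxm u _ m.2
    set ψ : ∀ u : ℕ, ↥(ℳ u) →ₗ[K] ↥(ℳ (u+1)) := fun u =>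
      LinearMap.codRestrict (ℳ (u+1)) ((φ.restrictScalars K) ∘ₗ (ℳ u).subtype)
        (hψmem u) with hψdef
    have hψcoe : ∀ (u : ℕ) (m : ↥(ℳ u)),
        ((ψ u m : M)) = (MvPolynomial.X 0 : MvPolynomial (Fin (r+1)) K) • (m : M) := by
      intro u m
      simp [hψdef, hφdef]
    set gm : ∀ u : ℕ, ↥(ℳ u) →ₗ[K] ↥(𝒬 u) := fun u =>
      LinearMap.codRestrict (𝒬 u) (π' ∘ₗ (ℳ u).subtype)
        (fun m => Submodule.mem_map_of_mem m.2) with hgmdef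
    have hgmcoe : ∀ (u : ℕ) (m : ↥(ℳ u)), ((gm u m : M ⧸ RR)) = π' (m : M) :=
      fun u m => rfl
    have hgmsurj : ∀ u, Function.Surjective (gm u) := by
      intro u q
      obtain ⟨m, hm, hq⟩ := q.2
      exact ⟨⟨m, hm⟩, Subtype.ext (by rw [hgmcoe]; exact hq)⟩
    have hkermem : ∀ (u : ℕ) (m : ↥(ℳ u)),
        m ∈ LinearMap.ker (gm u) ↔ (m : M) ∈ RR := by
      intro u m
      rw [LinearMap.mem_ker]
      rw [Subtype.ext_iff, hgmcoe, hπmk]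
      rw [ZeroMemClass.coe_zero]
      exact Submodule.Quotient.mk_eq_zero _
    have hkerψ : ∀ (u : ℕ) (m : ↥(ℳ u)), m ∈ LinearMap.ker (ψ u) ↔
        (MvPolynomial.X 0 : MvPolynomial (Fin (r+1)) K) • (m : M) = 0 := by
      intro u m
      rw [LinearMap.mem_ker, Subtype.ext_iff, hψcoe, ZeroMemClass.coe_zero]
    have hker0 : LinearMap.ker (gm 0) = ⊥ := by
      rw [eq_bot_iff]
      intro m hm
      obtain ⟨t, ht⟩ := (hmemR _).mp ((hkermem 0 m).mp hm)
      have h1 : (m : M) = proj ℳ 0 (m : M) := (proj_of_mem_same ℳ m.2).symm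
      rw [← ht, hzero] at h1
      rw [Submodule.mem_bot]
      apply Subtype.ext
      rw [ZeroMemClass.coe_zero, ← ht]
      exact h1
    have hkerS : ∀ u, LinearMap.ker (gm (u+1)) = LinearMap.range (ψ u) := by
      intro u
      ext m
      rw [hkermem, LinearMap.mem_range]
      constructor
      · intro hR
        obtain ⟨t, ht⟩ := (hmemR _).mp hR
        refine ⟨⟨proj ℳ u t, proj_mem ℳ u t⟩, Subtype.ext ?_⟩
        rw [hψcoe, ← hshift, ht]
        exact proj_of_mem_same ℳ m.2
      · rintro ⟨m', rfl⟩
        exact (hmemR _).mpr ⟨(m' : M), (hψcoe u m').symm⟩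
    have hfdM : ∀ u, FiniteDimensional K (ℳ u) := by
      intro u
      induction u with
      | zero =>
        haveI := hfdQ 0
        exact FiniteDimensional.of_injective (gm 0) (LinearMap.ker_eq_bot.mp hker0)
      | succ w ihw =>
        haveI := ihw
        haveI := hfdQ (w+1)
        haveI : IsNoetherian K ↥(ℳ w) := IsNoetherian.iff_fg.2 ihw
        haveI : IsNoetherian K ↥(𝒬 (w+1)) := IsNoetherian.iff_fg.2 (hfdQ (w+1))
        haveI := isNoetherian_of_range_eq_ker (ψ w) (gm (w+1)) (hkerS w).symm
        exact IsNoetherian.iff_fg.1 this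
    have hdim : ∀ u, finrank K (ℳ (u+1)) + finrank K (𝒩 u)
        = finrank K (ℳ u) + finrank K (𝒬 (u+1)) := by
      intro u
      haveI := hfdM u
      haveI := hfdM (u+1)
      haveI := hfdQ (u+1)
      haveI := hfdN u
      have e1 : ↥(LinearMap.ker (ψ u)) ≃ₗ[K] ↥(𝒩 u) :=
        { toFun := fun m => ⟨⟨((m : ↥(ℳ u)) : M), (hmemN _).mpr ((hkerψ u m).mp m.2)⟩,
            (hmem𝒩 u _).mpr (m : ↥(ℳ u)).2⟩
          map_add' := fun _ _ => rfl
          map_smul' := fun _ _ => rfl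
          invFun := fun n => ⟨⟨((n : ↥NN) : M), (hmem𝒩 u n).mp n.2⟩,
            (hkerψ u _).mpr ((hmemN _).mp (n : ↥NN).2)⟩
          left_inv := fun _ => rfl
          right_inv := fun _ => rfl }
      have h1 := LinearMap.finrank_range_add_finrank_ker (ψ u)
      have h2 := LinearMap.finrank_range_add_finrank_ker (gm (u+1))
      have h3 : finrank K ↥(LinearMap.range (gm (u+1))) = finrank K ↥(𝒬 (u+1)) := by
        rw [LinearMap.range_eq_top.mpr (hgmsurj (u+1))]
        exact finrank_top _ _
      have h4 : finrank K ↥(LinearMap.ker (gm (u+1)))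
          = finrank K ↥(LinearMap.range (ψ u)) := by rw [hkerS u]
      have h5 : finrank K ↥(LinearMap.ker (ψ u)) = finrank K ↥(𝒩 u) := e1.finrank_eq
      omega
    set Rpoly : Polynomial ℚ := PQ.comp (Polynomial.X + Polynomial.C 1) - PN with hRpoly
    have hRdeg : Rpoly.degree < ((r : ℕ) : WithBot ℕ) := by
      refine lt_of_le_of_lt (degree_sub_le _ _) (max_lt ?_ hPNdeg)
      by_cases h0 : PQ = 0
      · rw [h0, zero_comp, degree_zero]
        exact WithBot.bot_lt_coe _
      · have hnd : PQ.natDegree < r := by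
          rw [natDegree_lt_iff_degree_lt h0]
          exact hPQdeg
        refine lt_of_le_of_lt degree_le_natDegree ?_
        rw [natDegree_comp]
        have hX1 : (Polynomial.X + Polynomial.C (1 : ℚ)).natDegree = 1 := natDegree_X_add_C 1
        rw [hX1, mul_one]
        exact_mod_cast hnd
    have hReval : ∀ u : ℕ, max N1 N2 ≤ u →
        (finrank K (ℳ (u+1)) : ℚ) = (finrank K (ℳ u) : ℚ) + Rpoly.eval (u : ℚ) := by
      intro u hu
      have hd := hdim u
      have hQe : PQ.eval (((u+1 : ℕ)) : ℚ) = (finrank K (𝒬 (u+1)) : ℚ) :=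
        hPQ (u+1) (by omega)
      have hNe : PN.eval (u : ℚ) = (finrank K (𝒩 u) : ℚ) := hPN u (by omega)
      rw [hRpoly, eval_sub, eval_comp, eval_add, eval_X, eval_C]
      have hcast : ((u : ℚ) + 1) = (((u+1 : ℕ)) : ℚ) := by push_cast; ring
      rw [hcast, hQe, hNe]
      have hd' := congrArg (fun n : ℕ => (n : ℚ)) hd
      push_cast at hd'
      linarith
    obtain ⟨Pσ, hPσdeg, hPσ⟩ := sum_poly r Rpoly hRdeg
    set c : ℚ := (finrank K (ℳ (max N1 N2)) : ℚ) - Pσ.eval ((max N1 N2 : ℕ) : ℚ) with hc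
    refine ⟨hfdM, Pσ + Polynomial.C c, ?_, max N1 N2, ?_⟩
    · refine lt_of_le_of_lt (degree_add_le _ _) (max_lt ?_ ?_)
      · exact_mod_cast hPσdeg
      · refine lt_of_le_of_lt degree_C_le ?_
        exact_mod_cast Nat.succ_pos r
    · intro u hu
      induction u, hu using Nat.le_induction with
      | base =>
        rw [eval_add, eval_C, hc]
        ring
      | succ u hu ih =>
        rw [eval_add, eval_C] at ih ⊢
        have hstep : Pσ.eval (((u+1 : ℕ)) : ℚ) = Pσ.eval (u : ℚ) + Rpoly.eval (u : ℚ) := by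
          rw [hPσ, hPσ, Finset.sum_range_succ]
        have hcast : (((u+1 : ℕ)) : ℚ) = (u : ℚ) + 1 := by push_cast; ring
        rw [show ((u : ℚ) + 1) = (((u+1 : ℕ)) : ℚ) from hcast.symm] at *
        rw [hstep, hReval u hu]
        linarith

theorem statement6 (K : Type) [Field K] (r : ℕ)
    (M : Type) [AddCommGroup M] [Module (MvPolynomial (Fin r) K) M]
    [Module K M] [IsScalarTower K (MvPolynomial (Fin r) K) M]
    [Module.Finite (MvPolynomial (Fin r) K) M]
    -- the ℕ-grading on M, compatible with the standard (total-degree) grading on S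
    (ℳ : ℕ → Submodule K M)
    (hM : DirectSum.IsInternal ℳ)
    (hMgr : ∀ (j v : ℕ) (p : MvPolynomial (Fin r) K), p.IsHomogeneous j →
      ∀ m ∈ ℳ v, p • m ∈ ℳ (j + v)) :
    ∃ P : Polynomial ℚ, P.degree < (r : WithBot ℕ) ∧
      ∃ N : ℕ, ∀ u : ℕ, N ≤ u → P.eval (u : ℚ) = (Module.finrank K (ℳ u) : ℚ) := by
  exact (hilb_aux r K M ℳ hM hMgr).2
end

section
/- Let R be a commutative ring graded by ℕ^r and let M be an ℕ^r-graded R-module. Then every associated prime of M is a homogeneous ideal of R. -/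
/-!
Order ℕ^r lexicographically; this is a linear order compatible with addition. Let `p = Ann(m)`
be prime, `a ∈ p`, and `a⁺` the top-degree component of `a`. Comparing top-degree components
in `a • m = 0` shows that `a⁺` kills the top component of `m`, so `a⁺ • m` has fewer homogeneous
components and is still killed by `a`. By induction `a⁺ ^ k • m = 0`, where `k` is the number of
components of `m`, and primality gives `a⁺ ∈ p`. Subtracting `a⁺` from `a` and repeating puts
every homogeneous component of `a` into `p`.
-/

theorem DirectSum.IsInternal.exists_finset_sum_eq {ι M S : Type*} [DecidableEq ι]
    [AddCommMonoid M] [SetLike S M] [AddSubmonoidClass S M] {A : ι → S}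
    (h : DirectSum.IsInternal A) (m : M) :
    ∃ (t : Finset ι) (g : ι → M), (∀ i ∈ t, g i ∈ A i) ∧ ∑ i ∈ t, g i = m := by
  classical
  obtain ⟨x, rfl⟩ := h.surjective m
  exact ⟨x.support, fun i => x i, fun i _ => (x i).2,
    (DirectSum.coeAddMonoidHom_eq_dfinsuppSum A x).symm⟩

section GradedAnnihilator

variable {ι κ R M : Type*} [AddCommMonoid ι] [LinearOrder ι] [IsOrderedCancelAddMonoid ι]
  [CommRing R] [AddCommGroup M] [Module R M] {ℛ : ι → AddSubgroup R} {ℳ : ι → AddSubgroup M}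

theorem top_smul_top_eq_zero_of_smul_eq_zero (hℳ : iSupIndep ℳ)
    (hsmul : ∀ (u v : ι) (a : R) (m : M), a ∈ ℛ u → m ∈ ℳ v → a • m ∈ ℳ (u + v))
    {s : Finset ι} {f : ι → R} (hf : ∀ u ∈ s, f u ∈ ℛ u)
    {t : Finset κ} {deg : κ → ι} (hdeg : Set.InjOn deg t) {g : κ → M}
    (hg : ∀ i ∈ t, g i ∈ ℳ (deg i)) (h : (∑ u ∈ s, f u) • ∑ i ∈ t, g i = 0)
    {u₀ : ι} (hu₀ : u₀ ∈ s) (hu₀_max : ∀ u ∈ s, u ≤ u₀)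
    {i₀ : κ} (hi₀ : i₀ ∈ t) (hi₀_max : ∀ i ∈ t, deg i ≤ deg i₀) :
    f u₀ • g i₀ = 0 := by
  classical
  have hlt : ∀ q ∈ (s ×ˢ t).erase (u₀, i₀), q.1 + deg q.2 < u₀ + deg i₀ := by
    rintro ⟨u, i⟩ hq
    obtain ⟨hne, hu, hi⟩ : (u, i) ≠ (u₀, i₀) ∧ u ∈ s ∧ i ∈ t := by simpa using hq
    rcases (hu₀_max u hu).lt_or_eq with hlt | rfl
    · exact add_lt_add_of_lt_of_le hlt (hi₀_max i hi)
    · have : i ≠ i₀ := fun hii => hne (by rw [hii])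
      exact add_lt_add_of_le_of_lt le_rfl ((hi₀_max i hi).lt_of_ne (hdeg.ne hi hi₀ this))
  have hsum : f u₀ • g i₀ + ∑ q ∈ (s ×ˢ t).erase (u₀, i₀), f q.1 • g q.2 = 0 := by
    rw [Finset.add_sum_erase _ (fun q : ι × κ => f q.1 • g q.2) (Finset.mk_mem_product hu₀ hi₀),
      Finset.sum_product, ← h, Finset.sum_smul]
    simp only [Finset.smul_sum]
  refine AddSubgroup.disjoint_def.mp (hℳ _) (hsmul _ _ _ _ (hf u₀ hu₀) (hg i₀ hi₀)) ?_
  rw [eq_neg_of_add_eq_zero_left hsum]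
  refine neg_mem (AddSubgroup.sum_mem _ fun q hq => ?_)
  have hq' := Finset.mem_of_mem_erase hq
  rw [Finset.mem_product] at hq'
  exact AddSubgroup.mem_iSup_of_mem _ <| AddSubgroup.mem_iSup_of_mem (hlt q hq).ne
    (hsmul _ _ _ _ (hf q.1 hq'.1) (hg q.2 hq'.2))

theorem top_pow_card_smul_eq_zero_of_smul_eq_zero (hℳ : iSupIndep ℳ)
    (hsmul : ∀ (u v : ι) (a : R) (m : M), a ∈ ℛ u → m ∈ ℳ v → a • m ∈ ℳ (u + v))
    {s : Finset ι} {f : ι → R} (hf : ∀ u ∈ s, f u ∈ ℛ u)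
    {u₀ : ι} (hu₀ : u₀ ∈ s) (hu₀_max : ∀ u ∈ s, u ≤ u₀)
    (t : Finset κ) {deg : κ → ι} (hdeg : Set.InjOn deg t) {g : κ → M}
    (hg : ∀ i ∈ t, g i ∈ ℳ (deg i)) (h : (∑ u ∈ s, f u) • ∑ i ∈ t, g i = 0) :
    f u₀ ^ t.card • ∑ i ∈ t, g i = 0 := by
  classical
  induction t using Finset.strongInduction generalizing deg g with
  | H t ih =>
    obtain rfl | ht := t.eq_empty_or_nonempty
    · simp
    obtain ⟨i₀, hi₀, hi₀_max⟩ := t.exists_max_image deg ht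
    have hkill : f u₀ • g i₀ = 0 :=
      top_smul_top_eq_zero_of_smul_eq_zero hℳ hsmul hf hdeg hg h hu₀ hu₀_max hi₀ hi₀_max
    have hshift : f u₀ • ∑ i ∈ t, g i = ∑ i ∈ t.erase i₀, f u₀ • g i := by
      rw [← Finset.add_sum_erase t g hi₀, smul_add, hkill, zero_add, Finset.smul_sum]
    have hrest := ih (t.erase i₀) (Finset.erase_ssubset hi₀) (deg := fun i => u₀ + deg i)
      (fun i hi j hj hij => hdeg (Finset.mem_of_mem_erase hi) (Finset.mem_of_mem_erase hj)
        (add_left_cancel hij))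
      (fun i hi => hsmul _ _ _ _ (hf u₀ hu₀) (hg i (Finset.mem_of_mem_erase hi)))
      (by rw [← hshift, smul_comm, h, smul_zero])
    rw [← Finset.card_erase_add_one hi₀, pow_succ, mul_smul, hshift, hrest]

theorem mem_of_sum_mem_of_isPrime_annihilator (hℳ : iSupIndep ℳ)
    (hsmul : ∀ (u v : ι) (a : R) (m : M), a ∈ ℛ u → m ∈ ℳ v → a • m ∈ ℳ (u + v))
    {p : Ideal R} (hp : p.IsPrime) {t : Finset ι} {g : ι → M} (hg : ∀ v ∈ t, g v ∈ ℳ v)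
    (hann : ∀ a : R, a ∈ p ↔ a • ∑ v ∈ t, g v = 0)
    (s : Finset ι) {f : ι → R} (hf : ∀ u ∈ s, f u ∈ ℛ u) (hs : ∑ u ∈ s, f u ∈ p) :
    ∀ u ∈ s, f u ∈ p := by
  classical
  induction s using Finset.strongInduction with
  | H s ih =>
    obtain rfl | hne := s.eq_empty_or_nonempty
    · simp
    set u₀ := s.max' hne
    have htop : f u₀ ∈ p := hp.mem_of_pow_mem t.card <| (hann _).2 <|
      top_pow_card_smul_eq_zero_of_smul_eq_zero hℳ hsmul hf (s.max'_mem hne) (s.le_max' · )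
        t (Set.injOn_id _) hg ((hann _).1 hs)
    have hrest : ∑ u ∈ s.erase u₀, f u ∈ p := by
      have := p.sub_mem hs htop
      rwa [← Finset.sum_erase_add s f (s.max'_mem hne), add_sub_cancel_right] at this
    intro u hu
    by_cases hu₀ : u = u₀
    · exact hu₀ ▸ htop
    · exact ih _ (Finset.erase_ssubset (s.max'_mem hne))
        (fun v hv => hf v (Finset.mem_of_mem_erase hv)) hrest u (Finset.mem_erase.2 ⟨hu₀, hu⟩)

end GradedAnnihilator

theorem Ideal.eq_span_homogeneous_of_forall_mem {ι R : Type*} [DecidableEq ι] [CommRing R]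
    {ℛ : ι → AddSubgroup R} (hℛ : DirectSum.IsInternal ℛ) (p : Ideal R)
    (hp : ∀ (s : Finset ι) (f : ι → R), (∀ u ∈ s, f u ∈ ℛ u) → ∑ u ∈ s, f u ∈ p →
      ∀ u ∈ s, f u ∈ p) :
    p = Ideal.span {x | (∃ u, x ∈ ℛ u) ∧ x ∈ p} := by
  refine le_antisymm (fun a ha => ?_) (Ideal.span_le.2 fun x hx => hx.2)
  obtain ⟨s, f, hf, rfl⟩ := hℛ.exists_finset_sum_eq a
  exact Ideal.sum_mem _ fun u hu => Ideal.subset_span ⟨⟨u, hf u hu⟩, hp s f hf ha u hu⟩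

theorem statement7_general (r : ℕ) (R : Type) [CommRing R]
    -- the ℕ^r-grading on R
    (ℛ : (Fin r →₀ ℕ) → AddSubgroup R)
    (hR : DirectSum.IsInternal ℛ)
    -- the ℕ^r-graded module M
    (M : Type) [AddCommGroup M] [Module R M]
    (ℳ : (Fin r →₀ ℕ) → AddSubgroup M)
    (hM : DirectSum.IsInternal ℳ)
    (hMsmul : ∀ (u v : Fin r →₀ ℕ) (a : R) (m : M), a ∈ ℛ u → m ∈ ℳ v →
      a • m ∈ ℳ (u + v))
    -- p is an associated prime of M
    (p : Ideal R) (hp : p.IsPrime)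
    (hass : ∃ m : M, ∀ s : R, s ∈ p ↔ s • m = 0) :
    ∃ T : Set R, (∀ t ∈ T, ∃ u : Fin r →₀ ℕ, t ∈ ℛ u) ∧ p = Ideal.span T := by
  obtain ⟨m, hm⟩ := hass
  obtain ⟨t, g, hg, rfl⟩ := hM.exists_finset_sum_eq m
  refine ⟨_, fun x hx => hx.1, Ideal.eq_span_homogeneous_of_forall_mem hR p fun s f hf hs => ?_⟩
  -- top components are taken for the lexicographic order, which is compatible with addition
  exact mem_of_sum_mem_of_isPrime_annihilator (ι := Lex (Fin r →₀ ℕ))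
    hM.addSubgroup_iSupIndep hMsmul hp hg hm s hf hs

theorem statement7 (r : ℕ) (R : Type) [CommRing R]
    -- the ℕ^r-grading on R
    (ℛ : (Fin r →₀ ℕ) → AddSubgroup R)
    (hR : DirectSum.IsInternal ℛ)
    (hRmul : ∀ (u v : Fin r →₀ ℕ) (a b : R), a ∈ ℛ u → b ∈ ℛ v → a * b ∈ ℛ (u + v))
    -- the ℕ^r-graded module M
    (M : Type) [AddCommGroup M] [Module R M]
    (ℳ : (Fin r →₀ ℕ) → AddSubgroup M)
    (hM : DirectSum.IsInternal ℳ)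
    (hMsmul : ∀ (u v : Fin r →₀ ℕ) (a : R) (m : M), a ∈ ℛ u → m ∈ ℳ v →
      a • m ∈ ℳ (u + v))
    -- p is an associated prime of M
    (p : Ideal R) (hp : p.IsPrime)
    (hass : ∃ m : M, ∀ s : R, s ∈ p ↔ s • m = 0) :
    ∃ T : Set R, (∀ t ∈ T, ∃ u : Fin r →₀ ℕ, t ∈ ℛ u) ∧ p = Ideal.span T :=
  statement7_general r R ℛ hR M ℳ hM hMsmul p hp hass
end

section
/- Let M be a finitely generated ℕ^r-graded module over S = K[x_1,…,x_r]. Then every associated prime p of M is generated by a subset of the variables; that is, p = ⟨x_{i_1},…,x_{i_k}⟩ for some (possibly empty) subset {i_1,…,i_k} ⊆ {1,…,r}. -/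
/-!
Write `p = Ann(x)` with `x = ∑_{v ∈ F} x_v` split into homogeneous components, and fix a
monomial order. For `f ∈ p`, the component of `f • x` of degree `deg f + max F` is
`lt(f) • x_{max F}`, so the leading term of `f` kills the top component of `x`. Hence, if
`lt(f) ∉ p`, the element `lt(f) • x` has fewer homogeneous components and, `p` being prime,
still has annihilator `p`; induction on `|F|` shows that `p` contains the leading term, hence
every term, of each of its elements. A prime ideal containing a monomial contains one of its
variables, so `p` is spanned by the variables it contains.
-/

open MvPolynomial
open scoped MonomialOrder

theorem DirectSum.IsInternal.sum_filter_eq_zero {ι ι' R M : Type*} [DecidableEq ι] [Ring R]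
    [AddCommGroup M] [Module R M] {ℳ : ι → Submodule R M} (hM : IsInternal ℳ)
    (s : Finset ι') (d : ι' → ι) (g : ι' → M) (hg : ∀ i ∈ s, g i ∈ ℳ (d i))
    (h0 : ∑ i ∈ s, g i = 0) (δ : ι) : ∑ i ∈ s with d i = δ, g i = 0 := by
  classical
  let := hM.chooseDecomposition
  have := congrArg (fun x ↦ (decompose ℳ x δ : M)) h0
  simp only [decompose_sum, decompose_zero, sum_apply, AddSubmonoidClass.coe_finsetSum,
    zero_apply, ZeroMemClass.coe_zero] at this
  refine (Finset.sum_filter _ _).trans (Eq.trans (Finset.sum_congr rfl fun i hi ↦ ?_) this)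
  split_ifs with h
  · exact (decompose_of_mem_same ℳ (h ▸ hg i hi)).symm
  · exact (decompose_of_mem_ne ℳ (hg i hi) h).symm

theorem MonomialOrder.eq_and_eq_of_add_eq_add {σ : Type*} (ord : MonomialOrder σ)
    {a b c d : σ →₀ ℕ} (hac : a ≼[ord] c) (hbd : b ≼[ord] d) (h : a + b = c + d) :
    a = c ∧ b = d := by
  have hac' : a = c := by
    refine ord.toSyn.injective (hac.eq_of_not_lt fun hlt ↦ ?_)
    have := add_lt_add_of_lt_of_le hlt hbd
    rw [← map_add, ← map_add, h] at this
    exact this.false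
  subst hac'
  exact ⟨rfl, add_left_cancel h⟩

theorem Submodule.annihilator_span_singleton_smul_of_notMem {A N : Type*} [CommRing A]
    [AddCommGroup N] [Module A N] {p : Ideal A} (hp : p.IsPrime) {x : N}
    (hx : (A ∙ x).annihilator = p) {q : A} (hq : q ∉ p) : (A ∙ q • x).annihilator = p := by
  ext s
  rw [mem_annihilator_span_singleton, smul_smul, ← mem_annihilator_span_singleton, hx,
    hp.mul_mem_iff_mem_or_mem, or_iff_left hq]

theorem Ideal.IsPrime.eq_span_X_of_monomial_one_mem {σ R : Type*} [CommSemiring R]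
    {p : Ideal (MvPolynomial σ R)} (hp : p.IsPrime)
    (h : ∀ f ∈ p, ∀ u ∈ f.support, monomial u 1 ∈ p) :
    p = Ideal.span (X '' {i | X i ∈ p}) := by
  refine le_antisymm (fun f hf ↦ mem_ideal_span_X_image.mpr fun u hu ↦ ?_)
    (Ideal.span_le.mpr (by rintro _ ⟨i, hi, rfl⟩; exact hi))
  have hu_mem := h f hf u hu
  rw [monomial_eq, C_1, one_mul, Finsupp.prod, Ideal.IsPrime.prod_mem_iff (hp := hp)]
    at hu_mem
  obtain ⟨i, hi, hXi⟩ := hu_mem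
  exact ⟨i, hp.mem_of_pow_mem _ hXi, Finsupp.mem_support_iff.mp hi⟩

theorem MonomialOrder.monomial_coeff_mem_of_forall_leadingTerm_mem {σ R : Type*}
    [CommRing R] (ord : MonomialOrder σ) {I : Ideal (MvPolynomial σ R)}
    (hI : ∀ f ∈ I, ord.leadingTerm f ∈ I) {f : MvPolynomial σ R} (hf : f ∈ I) (u : σ →₀ ℕ) :
    monomial u (coeff u f) ∈ I := by
  classical
  rcases eq_or_ne f 0 with rfl | hf0
  · simp
  have hcoeff (v : σ →₀ ℕ) :
      coeff v (f - ord.leadingTerm f) = if v = ord.degree f then 0 else coeff v f := by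
    rw [coeff_sub, leadingTerm, coeff_monomial, leadingCoeff]
    split_ifs <;> simp_all [eq_comm]
  have hcard : (f - ord.leadingTerm f).support.card < f.support.card := by
    refine (Finset.card_le_card fun v hv ↦ ?_).trans_lt
      (Finset.card_erase_lt_of_mem (ord.degree_mem_support hf0))
    rw [mem_support_iff, hcoeff] at hv
    split_ifs at hv with h
    · exact absurd rfl hv
    · exact Finset.mem_erase.mpr ⟨h, mem_support_iff.mpr hv⟩
  by_cases hu : u = ord.degree f
  · subst hu
    exact hI f hf
  · have := ord.monomial_coeff_mem_of_forall_leadingTerm_mem hI (I.sub_mem hf (hI f hf)) u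
    rwa [hcoeff, if_neg hu] at this
termination_by f.support.card

section Graded

variable {σ R M : Type*} [DecidableEq σ] [CommRing R] [AddCommGroup M] [Module R M]
  [Module (MvPolynomial σ R) M] {ℳ : (σ →₀ ℕ) → Submodule R M}

theorem leadingTerm_smul_eq_zero_of_smul_sum_eq_zero (ord : MonomialOrder σ)
    (hM : DirectSum.IsInternal ℳ)
    (hgr : ∀ u v (c : R) (x : M), x ∈ ℳ v → monomial u c • x ∈ ℳ (u + v))
    {F : Finset (σ →₀ ℕ)} {g : (σ →₀ ℕ) → M} (hg : ∀ v ∈ F, g v ∈ ℳ v)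
    {v₀ : σ →₀ ℕ} (hv₀ : v₀ ∈ F) (hv₀max : ∀ v ∈ F, v ≼[ord] v₀)
    {f : MvPolynomial σ R} (hf : f • ∑ v ∈ F, g v = 0) :
    ord.leadingTerm f • g v₀ = 0 := by
  classical
  rcases eq_or_ne f 0 with rfl | hf0
  · simp
  have hterms : ∑ z ∈ f.support ×ˢ F, monomial z.1 (coeff z.1 f) • g z.2 = 0 := by
    rw [Finset.sum_product, ← hf]
    conv_rhs => rw [← f.support_sum_monomial_coeff, Finset.sum_smul]
    simp only [Finset.smul_sum]
  have hfiber :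
      {z ∈ f.support ×ˢ F | z.1 + z.2 = ord.degree f + v₀} = {(ord.degree f, v₀)} := by
    ext ⟨u, v⟩
    simp only [Finset.mem_filter, Finset.mem_product, Finset.mem_singleton, Prod.mk.injEq]
    constructor
    · rintro ⟨⟨hu, hv⟩, h⟩
      exact ord.eq_and_eq_of_add_eq_add (ord.le_degree_of_mem_support hu) (hv₀max v hv) h
    · rintro ⟨rfl, rfl⟩
      exact ⟨⟨ord.degree_mem_support hf0, hv₀⟩, rfl⟩
  have := hM.sum_filter_eq_zero (f.support ×ˢ F) (fun z ↦ z.1 + z.2)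
    (fun z ↦ monomial z.1 (coeff z.1 f) • g z.2)
    (fun z hz ↦ hgr _ _ _ _ (hg _ (Finset.mem_product.mp hz).2)) hterms (ord.degree f + v₀)
  rwa [hfiber, Finset.sum_singleton] at this

theorem leadingTerm_mem_of_annihilator_eq (ord : MonomialOrder σ) (hM : DirectSum.IsInternal ℳ)
    (hgr : ∀ u v (c : R) (x : M), x ∈ ℳ v → monomial u c • x ∈ ℳ (u + v))
    {p : Ideal (MvPolynomial σ R)} (hp : p.IsPrime) (F : Finset (σ →₀ ℕ)) {x : M}
    (hxF : x ∈ ⨆ v ∈ F, ℳ v) (hx : (MvPolynomial σ R ∙ x).annihilator = p)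
    {f : MvPolynomial σ R} (hf : f ∈ p) : ord.leadingTerm f ∈ p := by
  by_contra hq
  obtain ⟨g, rfl⟩ := (Submodule.mem_iSup_finset_iff_exists_sum ℳ x).mp hxF
  have hF : F.Nonempty := by
    rw [Finset.nonempty_iff_ne_empty]
    rintro rfl
    apply hp.ne_top
    simp [← hx, Submodule.annihilator_bot]
  obtain ⟨v₀, hv₀, hv₀max⟩ := F.exists_max_image ord.toSyn hF
  have hkill : ord.leadingTerm f • (g v₀ : M) = 0 :=
    leadingTerm_smul_eq_zero_of_smul_sum_eq_zero ord hM hgr (fun v _ ↦ (g v).2) hv₀ hv₀max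
      (by rwa [← Submodule.mem_annihilator_span_singleton, hx])
  have hcard : ((F.erase v₀).image (ord.degree f + ·)).card < F.card :=
    Finset.card_image_le.trans_lt (Finset.card_erase_lt_of_mem hv₀)
  have hxF' : ord.leadingTerm f • ∑ v ∈ F, (g v : M) ∈
      ⨆ v ∈ (F.erase v₀).image (ord.degree f + ·), ℳ v := by
    rw [Finset.smul_sum, ← Finset.add_sum_erase _ _ hv₀, hkill, zero_add]
    refine Submodule.sum_mem _ fun v hv ↦ ?_
    exact Submodule.mem_iSup_of_mem (ord.degree f + v) <|
      Submodule.mem_iSup_of_mem (Finset.mem_image_of_mem _ hv) (hgr _ _ _ _ (g v).2)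
  exact hq <| leadingTerm_mem_of_annihilator_eq ord hM hgr hp _ hxF'
    (Submodule.annihilator_span_singleton_smul_of_notMem hp hx hq) hf
termination_by F.card

end Graded

theorem statement9_general (K : Type) [Field K] (r : ℕ)
    (M : Type) [AddCommGroup M] [Module (MvPolynomial (Fin r) K) M]
    [Module K M]
    (ℳ : (Fin r →₀ ℕ) → Submodule K M)
    (hM : DirectSum.IsInternal ℳ)
    (hMgr : ∀ (u v : Fin r →₀ ℕ) (c : K) (m : M), m ∈ ℳ v →
      (MvPolynomial.monomial u c) • m ∈ ℳ (u + v))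
    -- p is an associated prime of M
    (p : Ideal (MvPolynomial (Fin r) K)) (hp : p.IsPrime)
    (hass : ∃ m : M, ∀ s : MvPolynomial (Fin r) K, s ∈ p ↔ s • m = 0) :
    ∃ s : Set (Fin r), p = Ideal.span (MvPolynomial.X '' s) := by
  obtain ⟨x, hx⟩ := hass
  have hann : (MvPolynomial (Fin r) K ∙ x).annihilator = p :=
    Ideal.ext fun s ↦ (Submodule.mem_annihilator_span_singleton x s).trans (hx s).symm
  obtain ⟨F, hxF⟩ := Submodule.mem_iSup_iff_exists_finset.mp
    (hM.submodule_iSup_eq_top ▸ Submodule.mem_top : x ∈ ⨆ v, ℳ v)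
  have hlt (f) (hf : f ∈ p) : MonomialOrder.lex.leadingTerm f ∈ p :=
    leadingTerm_mem_of_annihilator_eq MonomialOrder.lex hM hMgr hp F hxF hann hf
  refine ⟨_, hp.eq_span_X_of_monomial_one_mem fun f hf u hu ↦ ?_⟩
  have := Ideal.mul_mem_left p (C (coeff u f)⁻¹)
    (MonomialOrder.lex.monomial_coeff_mem_of_forall_leadingTerm_mem hlt hf u)
  rwa [C_mul_monomial, inv_mul_cancel₀ (mem_support_iff.mp hu)] at this

theorem statement9 (K : Type) [Field K] (r : ℕ)
    (M : Type) [AddCommGroup M] [Module (MvPolynomial (Fin r) K) M]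
    [Module K M] [IsScalarTower K (MvPolynomial (Fin r) K) M]
    [Module.Finite (MvPolynomial (Fin r) K) M]
    (ℳ : (Fin r →₀ ℕ) → Submodule K M)
    (hM : DirectSum.IsInternal ℳ)
    (hMgr : ∀ (u v : Fin r →₀ ℕ) (c : K) (m : M), m ∈ ℳ v →
      (MvPolynomial.monomial u c) • m ∈ ℳ (u + v))
    -- p is an associated prime of M
    (p : Ideal (MvPolynomial (Fin r) K)) (hp : p.IsPrime)
    (hass : ∃ m : M, ∀ s : MvPolynomial (Fin r) K, s ∈ p ↔ s • m = 0) :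
    ∃ s : Set (Fin r), p = Ideal.span (MvPolynomial.X '' s) :=
  statement9_general K r M ℳ hM hMgr p hp hass
end

section
/- Let M be a finitely generated ℕ^r-graded module over S = K[x_1,…,x_r] and let p = ⟨x_1,…,x_k⟩ be an associated prime of M generated by the first k variables. Then H^0_p(M) is finitely generated as a module over the subring S_{c_p} = K[x_{k+1},…,x_r] of S. -/
/-!
`H⁰_p(M)` is a submodule of the Noetherian module `M`, hence finitely generated, hence killed
by a single power `p ^ n`. Modulo `p ^ n` every polynomial is a `K[x_{k+1},…,x_r]`-combination
of the finitely many monomials whose exponents are all at most `n`, so the products of these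
monomials with generators of `H⁰_p(M)` span it over `K[x_{k+1},…,x_r]`.
-/

open Pointwise

namespace Submodule

variable {R M : Type*} [CommRing R] [AddCommGroup M] [Module R M]

variable (M) in
/-- The zeroth local cohomology `H⁰_I(M)`. -/
def powTorsion (I : Ideal R) : Submodule R M where
  carrier := {m | ∃ n : ℕ, ∀ s ∈ I ^ n, s • m = 0}
  zero_mem' := ⟨0, fun s _ ↦ smul_zero s⟩
  add_mem' := by
    rintro a b ⟨na, ha⟩ ⟨nb, hb⟩
    refine ⟨max na nb, fun s hs ↦ ?_⟩
    rw [smul_add, ha s (Ideal.pow_le_pow_right (le_max_left _ _) hs),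
      hb s (Ideal.pow_le_pow_right (le_max_right _ _) hs), add_zero]
  smul_mem' := by
    rintro c m ⟨n, hn⟩
    exact ⟨n, fun s hs ↦ by rw [smul_smul, hn _ (Ideal.mul_mem_right c _ hs)]⟩

theorem mem_powTorsion {I : Ideal R} {m : M} :
    m ∈ powTorsion M I ↔ ∃ n : ℕ, ∀ s ∈ I ^ n, s • m = 0 := Iff.rfl

theorem exists_pow_smul_eq_zero_of_subset_powTorsion {I : Ideal R} {T : Finset M}
    (hT : (T : Set M) ⊆ powTorsion M I) : ∃ n : ℕ, ∀ t ∈ T, ∀ s ∈ I ^ n, s • t = 0 := by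
  have hT' : ∀ t ∈ T, ∃ n : ℕ, ∀ s ∈ I ^ n, s • t = 0 := fun t ht ↦ mem_powTorsion.mp (hT ht)
  choose! e he using hT'
  exact ⟨T.sup e, fun t ht s hs ↦ he t ht s (Ideal.pow_le_pow_right (Finset.le_sup ht) hs)⟩

theorem restrictScalars_span_le_span_smul {A : Type*} [CommSemiring A] [Algebra A R]
    [Module A M] [IsScalarTower A R M] {J : Ideal R} {S : Set R} {T : Set M}
    (hS : ∀ x : R, x ∈ span A S ⊔ J.restrictScalars A)
    (hT : ∀ t ∈ T, ∀ j ∈ J, j • t = 0) :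
    (span R T).restrictScalars A ≤ span A (S • T) := by
  have smul_mem : ∀ x : R, ∀ t ∈ T, x • t ∈ span A (S • T) := by
    intro x t ht
    obtain ⟨a, ha, j, hj, rfl⟩ := mem_sup.mp (hS x)
    rw [add_smul, hT t ht j hj, add_zero]
    induction ha using span_induction with
    | mem s hs => exact subset_span (Set.smul_mem_smul hs ht)
    | zero => rw [zero_smul]; exact zero_mem _
    | add a b _ _ iha ihb => rw [add_smul]; exact add_mem iha ihb
    | smul c a _ iha => rw [smul_assoc]; exact Submodule.smul_mem _ c iha
  intro m hm
  suffices ∀ x : R, x • m ∈ span A (S • T) by simpa using this 1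
  induction hm using span_induction with
  | mem t ht => exact fun x ↦ smul_mem x t ht
  | zero => simp
  | add m m' _ _ ihm ihm' => exact fun x ↦ by rw [smul_add]; exact add_mem (ihm x) (ihm' x)
  | smul c m _ ihm => exact fun x ↦ by rw [smul_smul]; exact ihm (x * c)

end Submodule

namespace MvPolynomial

variable {σ K : Type*} [CommSemiring K]

theorem monomial_mem_pow_of_X_mem {I : Ideal (MvPolynomial σ K)} {i : σ} (hi : X i ∈ I)
    {u : σ →₀ ℕ} {n : ℕ} (hn : n ≤ u i) (a : K) : monomial u a ∈ I ^ n := by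
  have : monomial u a = monomial (u - Finsupp.single i n) a * X i ^ n := by
    rw [X_pow_eq_monomial, monomial_mul, mul_one,
      tsub_add_cancel_of_le (Finsupp.single_le_iff.mpr hn)]
  rw [this]
  exact Ideal.mul_mem_left _ _ (Ideal.pow_mem_pow hi n)

theorem monomial_mem_supported {s : Set σ} {u : σ →₀ ℕ} (hu : ↑u.support ⊆ s) (a : K) :
    monomial u a ∈ supported K s := by
  rcases eq_or_ne a 0 with rfl | ha
  · rw [monomial_zero]; exact zero_mem _
  · rwa [mem_supported, vars_monomial ha]

theorem mem_span_monomial_Iic_sup_pow {t : Finset σ} {I : Ideal (MvPolynomial σ K)}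
    (hI : ∀ i ∈ t, X i ∈ I) {n : ℕ} {d : σ →₀ ℕ} (hd : ∀ i ∈ t, n ≤ d i)
    (f : MvPolynomial σ K) :
    f ∈ Submodule.span (supported K (t : Set σ)ᶜ) ((fun v ↦ monomial v (1 : K)) '' Set.Iic d) ⊔
      (I ^ n).restrictScalars (supported K (t : Set σ)ᶜ) := by
  classical
  induction f using induction_on' with
  | add f g hf hg => exact add_mem hf hg
  | monomial u a =>
    by_cases hu : ∃ i ∈ t, n ≤ u i
    · obtain ⟨i, hit, hni⟩ := hu
      exact Submodule.mem_sup_right (monomial_mem_pow_of_X_mem (hI i hit) hni a)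
    push Not at hu
    have hout : monomial (u.filter (· ∉ t)) a ∈ supported K (t : Set σ)ᶜ :=
      monomial_mem_supported (fun i hi ↦ (Finset.mem_filter.mp hi).2) a
    have hin : u.filter (· ∈ t) ≤ d := fun i ↦ by
      rw [Finsupp.filter_apply]
      split_ifs with hit
      · exact ((hu i hit).trans_le (hd i hit)).le
      · exact Nat.zero_le _
    have hsplit : monomial u a = (⟨_, hout⟩ : supported K (t : Set σ)ᶜ) •
        monomial (u.filter (· ∈ t)) (1 : K) := by
      rw [Subalgebra.smul_def, smul_eq_mul, monomial_mul, mul_one, add_comm,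
        Finsupp.filter_add_filter_not]
    rw [hsplit]
    exact Submodule.mem_sup_left (Submodule.smul_mem _ _ (Submodule.subset_span ⟨_, hin, rfl⟩))

end MvPolynomial

open MvPolynomial Submodule

theorem statement11_general (K : Type) [Field K] (r k : ℕ)
    (M : Type) [AddCommGroup M] [Module (MvPolynomial (Fin r) K) M]
    [Module.Finite (MvPolynomial (Fin r) K) M]
    -- p = ⟨x_1,…,x_k⟩ is an associated prime of M
    (p : Ideal (MvPolynomial (Fin r) K))
    (hpdef : p = Ideal.span {f | ∃ i : Fin r, (i : ℕ) < k ∧ f = MvPolynomial.X i}) :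
    ∃ G : Finset M,
      (∀ g ∈ G, ∃ n : ℕ, ∀ s ∈ p ^ n, s • g = 0) ∧
      ∀ m : M, (∃ n : ℕ, ∀ s ∈ p ^ n, s • m = 0) →
        ∃ c : M → MvPolynomial (Fin r) K,
          (∀ g : M, c g ∈ Algebra.adjoin K
            {f : MvPolynomial (Fin r) K | ∃ i : Fin r, k ≤ (i : ℕ) ∧ f = MvPolynomial.X i}) ∧
          m = ∑ g ∈ G, c g • g := by
  classical
  set t : Finset (Fin r) := {i | (i : ℕ) < k}
  have hA : Algebra.adjoin K {f | ∃ i : Fin r, k ≤ (i : ℕ) ∧ f = X i} =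
      supported K (t : Set (Fin r))ᶜ := by
    rw [supported_eq_adjoin_X]
    congr 1
    ext f
    simp [t, eq_comm]
  have hXp : ∀ i ∈ t, X i ∈ p := fun i hi ↦
    hpdef ▸ Ideal.subset_span ⟨i, (Finset.mem_filter.mp hi).2, rfl⟩
  obtain ⟨T, hT⟩ := IsNoetherian.noetherian (powTorsion M p)
  have hTp : (T : Set M) ⊆ powTorsion M p := hT ▸ subset_span
  obtain ⟨n, hn⟩ := exists_pow_smul_eq_zero_of_subset_powTorsion hTp
  set S := (Finset.Iic (Finsupp.equivFunOnFinite.symm fun _ : Fin r ↦ n)).image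
    fun v ↦ monomial v (1 : K)
  have hspan : (powTorsion M p).restrictScalars (supported K (t : Set (Fin r))ᶜ) ≤
      span (supported K (t : Set (Fin r))ᶜ) ↑(S • T) := by
    rw [← hT, Finset.coe_smul, Finset.coe_image, Finset.coe_Iic]
    exact restrictScalars_span_le_span_smul
      (mem_span_monomial_Iic_sup_pow hXp fun _ _ ↦ le_rfl) hn
  refine ⟨S • T, fun g hg ↦ ?_, fun m hm ↦ ?_⟩
  · obtain ⟨s, -, g, hgT, rfl⟩ := Finset.mem_smul.mp hg
    exact (powTorsion M p).smul_mem s (hTp hgT)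
  · obtain ⟨c, -, hc⟩ := mem_span_finset.mp (hspan hm)
    exact ⟨fun g ↦ c g, fun g ↦ hA.symm ▸ (c g).2, hc.symm⟩

theorem statement11 (K : Type) [Field K] (r k : ℕ)
    (M : Type) [AddCommGroup M] [Module (MvPolynomial (Fin r) K) M]
    [Module K M] [IsScalarTower K (MvPolynomial (Fin r) K) M]
    [Module.Finite (MvPolynomial (Fin r) K) M]
    (ℳ : (Fin r →₀ ℕ) → Submodule K M)
    (hM : DirectSum.IsInternal ℳ)
    (hMgr : ∀ (u v : Fin r →₀ ℕ) (c : K) (m : M), m ∈ ℳ v →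
      (MvPolynomial.monomial u c) • m ∈ ℳ (u + v))
    -- p = ⟨x_1,…,x_k⟩ is an associated prime of M
    (p : Ideal (MvPolynomial (Fin r) K))
    (hpdef : p = Ideal.span {f | ∃ i : Fin r, (i : ℕ) < k ∧ f = MvPolynomial.X i})
    (hp : p.IsPrime)
    (hass : ∃ m : M, ∀ s : MvPolynomial (Fin r) K, s ∈ p ↔ s • m = 0) :
    ∃ G : Finset M,
      (∀ g ∈ G, ∃ n : ℕ, ∀ s ∈ p ^ n, s • g = 0) ∧
      ∀ m : M, (∃ n : ℕ, ∀ s ∈ p ^ n, s • m = 0) →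
        ∃ c : M → MvPolynomial (Fin r) K,
          (∀ g : M, c g ∈ Algebra.adjoin K
            {f : MvPolynomial (Fin r) K | ∃ i : Fin r, k ≤ (i : ℕ) ∧ f = MvPolynomial.X i}) ∧
          m = ∑ g ∈ G, c g • g :=
  statement11_general K r k M p hpdef
end

section
/- Let M be a finitely generated ℕ^r-graded module over S = K[x_1,…,x_r] and let p = ⟨x_1,…,x_k⟩ be an associated prime of M. Then there exists a polynomial P ∈ ℤ[t_1,…,t_r] such that, as an identity of formal power series, ∏_{i=k+1}^{r}(1−t_i) · HS(H^0_p(M), t) = P(t_1,…,t_r); that is, HS(H^0_p(M),t) = P(t_1,…,t_r)/∏_{i=k+1}^{r}(1−t_i). -/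
/-!
Since `M` is noetherian and `p` is a monomial ideal, `H⁰_p(M)` is a graded submodule generated by
finitely many homogeneous elements, each killed by a power of every variable of `p`. Add these
generators one at a time to a graded submodule `N`. For a generator `g` of degree `d`, the degree
`u` part grows by one dimension exactly when `d ≤ u` and `x^(u-d) • g ∉ N`, so the Hilbert series
grows by `t^d` times the indicator series of `A = {w | x^w • g ∉ N}`. This `A` is a lower set of
exponents, bounded in the variables of `p`. Slicing `A` along these bounded exponents leaves
finitely many lower sets in the remaining variables. By Dickson's lemma, the complement of each
slice is generated by finitely many exponents, and inclusion–exclusion over them shows that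
`∏_{i > k} (1 - t_i)` times the slice's indicator series is a polynomial.
-/

open Finset DirectSum

namespace MultigradedHilbertSeries

section PowerSeries

open MvPowerSeries

variable {σ : Type*} (R : Type*) [CommRing R]

noncomputable def indicatorSeries (A : Set (σ →₀ ℕ)) : MvPowerSeries σ R :=
  A.indicator 1

theorem coeff_indicatorSeries (A : Set (σ →₀ ℕ)) (u : σ →₀ ℕ) [Decidable (u ∈ A)] :
    coeff u (indicatorSeries R A) = if u ∈ A then 1 else 0 :=
  Set.indicator_apply A 1 u

def withDenominator (T : Finset σ) : Submodule (MvPolynomial σ R) (MvPowerSeries σ R) where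
  carrier := {f | ∃ P : MvPolynomial σ R, (∏ i ∈ T, (1 - X i)) * f = P}
  zero_mem' := ⟨0, by simp⟩
  add_mem' := by
    rintro f g ⟨P, hP⟩ ⟨Q, hQ⟩
    exact ⟨P + Q, by rw [mul_add, hP, hQ, MvPolynomial.coe_add]⟩
  smul_mem' := by
    rintro c f ⟨P, hP⟩
    refine ⟨c * P, ?_⟩
    rw [Algebra.smul_def, mul_left_comm, hP, MvPolynomial.coe_mul]
    rfl

variable {R}

theorem mem_withDenominator {T : Finset σ} {f : MvPowerSeries σ R} :
    f ∈ withDenominator R T ↔ ∃ P : MvPolynomial σ R, (∏ i ∈ T, (1 - X i)) * f = P :=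
  Iff.rfl

theorem coeff_one_sub_X_mul [DecidableEq σ] (i : σ) (f : MvPowerSeries σ R) (u : σ →₀ ℕ) :
    coeff u ((1 - X i) * f) =
      coeff u f - if u i = 0 then 0 else coeff (u - Finsupp.single i 1) f := by
  rw [sub_mul, one_mul, map_sub, X, coeff_monomial_mul, one_mul]
  simp [Finsupp.single_le_iff, Nat.one_le_iff_ne_zero]

theorem one_sub_X_mul_indicatorSeries_insert [DecidableEq σ] {i : σ} {T : Finset σ} (hi : i ∉ T) :
    (1 - X i) * indicatorSeries R {w | w.support ⊆ insert i T} =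
      indicatorSeries R {w | w.support ⊆ T} := by
  ext u
  rw [coeff_one_sub_X_mul, coeff_indicatorSeries, coeff_indicatorSeries, coeff_indicatorSeries]
  have hsub : (u - Finsupp.single i 1).support ⊆ insert i T ↔ u.support ⊆ insert i T := by
    simp only [Finset.subset_iff, Finsupp.mem_support_iff, Finset.mem_insert]
    refine forall_congr' fun j => ?_
    by_cases hj : j = i <;> simp [hj]
  by_cases hu : u i = 0
  · have : u.support ⊆ insert i T ↔ u.support ⊆ T := by
      rw [Finset.subset_insert_iff_of_notMem (by simpa using hu)]
    simp only [Set.mem_ofPred_eq, this, hu, if_true, sub_zero]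
  · have : ¬ u.support ⊆ T := fun h => hi (h (by simpa using hu))
    simp only [Set.mem_ofPred_eq, hsub, hu, this, if_false, sub_self]

theorem prod_one_sub_X_mul_indicatorSeries (T : Finset σ) :
    (∏ i ∈ T, (1 - X i)) * indicatorSeries R {w | w.support ⊆ T} = 1 := by
  classical
  induction T using Finset.induction_on with
  | empty =>
    ext u
    rw [prod_empty, one_mul, coeff_indicatorSeries, coeff_one]
    simp [Finsupp.support_eq_empty]
  | insert i T hi ih =>
    rw [prod_insert hi, mul_comm (1 - X i), mul_assoc, one_sub_X_mul_indicatorSeries_insert hi, ih]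

theorem exists_finset_forall_le_of_wellQuasiOrderedLE {α : Type*} [PartialOrder α]
    [WellQuasiOrderedLE α] (U : Set α) : ∃ F : Finset α, ↑F ⊆ U ∧ ∀ w ∈ U, ∃ f ∈ F, f ≤ w := by
  have hfin : {x | Minimal (· ∈ U) x}.Finite :=
    WellQuasiOrderedLE.finite_of_isAntichain (setOfPred_minimal_antichain _)
  refine ⟨hfin.toFinset, fun f hf => (hfin.mem_toFinset.mp hf).prop, fun w hw => ?_⟩
  obtain ⟨f, hfw, hf⟩ := (Set.isPWO_of_wellQuasiOrderedLE U).exists_le_minimal hw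
  exact ⟨f, hfin.mem_toFinset.mpr hf, hfw⟩

theorem support_tsub_subset_iff {T : Finset σ} {v : σ →₀ ℕ} (hv : v.support ⊆ T) (u : σ →₀ ℕ) :
    (u - v).support ⊆ T ↔ u.support ⊆ T := by
  refine ⟨fun h j hj => ?_, fun h => Finsupp.support_tsub.trans h⟩
  by_contra hjT
  have hvj : v j = 0 := Finsupp.notMem_support_iff.mp fun hj' => hjT (hv hj')
  exact hjT (h (by simpa [hvj] using hj))

theorem indicatorSeries_eq_sum_powerset {T : Finset σ} {F : Finset (σ →₀ ℕ)}
    (hF : ∀ f ∈ F, f.support ⊆ T) :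
    indicatorSeries R {w | w.support ⊆ T ∧ ∀ f ∈ F, ¬ f ≤ w} =
      ∑ G ∈ F.powerset,
        monomial (G.sup id) ((-1) ^ #G) * indicatorSeries R {w | w.support ⊆ T} := by
  classical
  ext u
  have hsup : ∀ G ∈ F.powerset, (G.sup id).support ⊆ T := fun G hG =>
    Finset.sup_induction (p := fun w : σ →₀ ℕ => w.support ⊆ T)
      (by simp [bot_eq_zero])
      (fun a ha b hb => by rw [Finsupp.support_sup]; exact Finset.union_subset ha hb)
      (fun f hf => hF f (Finset.mem_powerset.mp hG hf))
  have hterm : ∀ G ∈ F.powerset,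
      coeff u (monomial (G.sup id) ((-1) ^ #G) * indicatorSeries R {w | w.support ⊆ T}) =
        (if u.support ⊆ T then 1 else 0) * ((-1) ^ #G * ∏ f ∈ G, if f ≤ u then 1 else 0) := by
    intro G hG
    have hle : G.sup id ≤ u ↔ ∀ f ∈ G, f ≤ u := Finset.sup_le_iff
    simp only [coeff_monomial_mul, coeff_indicatorSeries, Finset.prod_boole, hle,
      Set.mem_ofPred_eq, support_tsub_subset_iff (hsup G hG)]
    split_ifs <;> simp
  have hincl : ∑ G ∈ F.powerset, (-1) ^ #G * ∏ f ∈ G, (if f ≤ u then (1 : R) else 0) =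
      if ∀ f ∈ F, ¬ f ≤ u then 1 else 0 := by
    have := (Finset.prod_sub 1 (fun f => if f ≤ u then (1 : R) else 0) F).symm
    simp only [Pi.one_apply, prod_const_one, mul_one] at this
    rw [this, ← Finset.prod_boole]
    exact Finset.prod_congr rfl fun f _ => by split_ifs <;> simp
  rw [coeff_indicatorSeries, map_sum, Finset.sum_congr rfl hterm, ← Finset.mul_sum, hincl]
  simp only [Set.mem_ofPred_eq, ite_and, ite_mul, one_mul, zero_mul]

theorem monomial_mul_mem_withDenominator {T : Finset σ} {f : MvPowerSeries σ R}
    (hf : f ∈ withDenominator R T) (b : σ →₀ ℕ) (c : R) :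
    monomial b c * f ∈ withDenominator R T := by
  have := Submodule.smul_mem _ (MvPolynomial.monomial b c) hf
  rwa [Algebra.smul_def, show algebraMap (MvPolynomial σ R) (MvPowerSeries σ R)
    (MvPolynomial.monomial b c) = monomial b c from MvPolynomial.coe_monomial b c] at this

theorem indicatorSeries_mem_withDenominator_of_support_subset [Finite σ] {T : Finset σ}
    {A : Set (σ →₀ ℕ)} (hA : IsLowerSet A) (hAT : ∀ w ∈ A, w.support ⊆ T) :
    indicatorSeries R A ∈ withDenominator R T := by
  classical
  obtain ⟨F, hFU, hcov⟩ :=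
    exists_finset_forall_le_of_wellQuasiOrderedLE {w : σ →₀ ℕ | w.support ⊆ T ∧ w ∉ A}
  have hAF : A = {w | w.support ⊆ T ∧ ∀ f ∈ F, ¬ f ≤ w} := by
    ext w
    refine ⟨fun hw => ⟨hAT w hw, fun f hf hfw => (hFU hf).2 (hA hfw hw)⟩, ?_⟩
    rintro ⟨hwT, hw⟩
    by_contra hwA
    obtain ⟨f, hf, hfw⟩ := hcov w ⟨hwT, hwA⟩
    exact hw f hf hfw
  rw [hAF, indicatorSeries_eq_sum_powerset fun f hf => (hFU hf).1]
  refine Submodule.sum_mem _ fun G _ =>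
    monomial_mul_mem_withDenominator (mem_withDenominator.mpr ⟨1, ?_⟩) _ _
  rw [prod_one_sub_X_mul_indicatorSeries, MvPolynomial.coe_one]

theorem le_and_support_tsub_subset_iff [DecidableEq σ] {T : Finset σ} {b : σ →₀ ℕ}
    (hb : Disjoint b.support T) (u : σ →₀ ℕ) :
    b ≤ u ∧ (u - b).support ⊆ T ↔ b = u.filter (· ∉ T) := by
  have hbT : ∀ j ∈ T, b j = 0 := fun j hj =>
    Finsupp.notMem_support_iff.mp fun h => Finset.disjoint_left.mp hb h hj
  constructor
  · rintro ⟨hbu, hsub⟩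
    ext j
    by_cases hj : j ∈ T
    · simp [hj, hbT j hj]
    · have : u j - b j = 0 := by simpa using mt (@hsub j) (by simpa using hj)
      have := hbu j
      simp only [Finsupp.filter_apply, hj, not_false_eq_true, if_true]
      omega
  · rintro rfl
    refine ⟨fun j => ?_, fun j hj => ?_⟩
    · rw [Finsupp.filter_apply]; split_ifs <;> omega
    · by_contra hjT
      simp [hjT] at hj

theorem indicatorSeries_eq_sum_slices [DecidableEq σ] {T : Finset σ} {A : Set (σ →₀ ℕ)}
    {B : Finset (σ →₀ ℕ)} (hB : ∀ b ∈ B, Disjoint b.support T)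
    (hAB : ∀ u ∈ A, u.filter (· ∉ T) ∈ B) :
    indicatorSeries R A =
      ∑ b ∈ B, monomial b 1 * indicatorSeries R {w | w.support ⊆ T ∧ b + w ∈ A} := by
  classical
  ext u
  have hterm : ∀ b ∈ B, coeff u (monomial b (1 : R) * indicatorSeries R
      {w | w.support ⊆ T ∧ b + w ∈ A}) = if b = u.filter (· ∉ T) ∧ u ∈ A then 1 else 0 := by
    intro b hb
    rw [coeff_monomial_mul, coeff_indicatorSeries, one_mul]
    simp only [Set.mem_ofPred_eq, ← le_and_support_tsub_subset_iff (hB b hb)]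
    by_cases hbu : b ≤ u <;> simp [hbu, add_tsub_cancel_of_le]
  rw [map_sum, Finset.sum_congr rfl hterm, coeff_indicatorSeries]
  by_cases hu : u ∈ A
  · simp [hu, hAB u hu]
  · simp [hu]

theorem indicatorSeries_mem_withDenominator [Finite σ] {T : Finset σ} {A : Set (σ →₀ ℕ)}
    (hA : IsLowerSet A) {n : ℕ} (hAn : ∀ w ∈ A, ∀ i ∉ T, w i < n) :
    indicatorSeries R A ∈ withDenominator R T := by
  classical
  let B := (Finset.Iic (Finsupp.equivFunOnFinite.symm fun _ => n)).filter
    (fun b : σ →₀ ℕ => Disjoint b.support T)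
  have hAB : ∀ u ∈ A, u.filter (· ∉ T) ∈ B := by
    intro u hu
    refine Finset.mem_filter.mpr ⟨Finset.mem_Iic.mpr fun j => ?_, ?_⟩
    · by_cases hj : j ∈ T
      · simp [hj]
      · simpa [hj] using (hAn u hu j hj).le
    · rw [Finsupp.support_filter]
      exact Finset.disjoint_left.mpr fun j hj => (Finset.mem_filter.mp hj).2
  rw [indicatorSeries_eq_sum_slices (fun b hb => (Finset.mem_filter.mp hb).2) hAB]
  refine Submodule.sum_mem _ fun b _ => monomial_mul_mem_withDenominator
    (indicatorSeries_mem_withDenominator_of_support_subset ?_ fun w hw => hw.1) _ _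
  rintro v w hwv ⟨hvT, hv⟩
  exact ⟨(Finsupp.support_mono hwv).trans hvT, hA (add_le_add_right hwv b) hv⟩

end PowerSeries

section Shift

open MvPolynomial

variable {σ M : Type*} (K : Type*) [Field K] [AddCommGroup M] [Module (MvPolynomial σ K) M]

noncomputable def shiftTo (d : σ →₀ ℕ) (g : M) (u : σ →₀ ℕ) : M :=
  if d ≤ u then monomial (u - d) (1 : K) • g else 0

variable {K}

theorem shiftTo_mem_span_singleton (d : σ →₀ ℕ) (g : M) (u : σ →₀ ℕ) :
    shiftTo K d g u ∈ MvPolynomial σ K ∙ g := by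
  unfold shiftTo
  split_ifs
  · exact Submodule.smul_mem _ _ (Submodule.mem_span_singleton_self g)
  · exact zero_mem _

theorem isLowerSet_setOf_monomial_smul_notMem (N : Submodule (MvPolynomial σ K) M) (g : M) :
    IsLowerSet {w : σ →₀ ℕ | monomial w (1 : K) • g ∉ N} := by
  intro v w hwv hv hw
  apply hv
  rw [← tsub_add_cancel_of_le hwv, ← mul_one (1 : K), ← monomial_mul, mul_smul]
  exact N.smul_mem _ hw

theorem lt_of_monomial_smul_notMem {N : Submodule (MvPolynomial σ K) M} {g : M} {i : σ} {n : ℕ}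
    (hn : (X i : MvPolynomial σ K) ^ n • g = 0) {w : σ →₀ ℕ} (hw : monomial w (1 : K) • g ∉ N) :
    w i < n := by
  by_contra! hnw
  apply hw
  have : monomial w (1 : K) = monomial (w - Finsupp.single i n) 1 * X i ^ n := by
    rw [X_pow_eq_monomial, monomial_mul, one_mul,
      tsub_add_cancel_of_le (Finsupp.single_le_iff.mpr hnw)]
  rw [this, mul_smul, hn, smul_zero]
  exact zero_mem N

end Shift

section Graded

open MvPolynomial

variable {σ K M : Type*} [Field K] [AddCommGroup M] [Module (MvPolynomial σ K) M] [Module K M]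
  (ℳ : (σ →₀ ℕ) → Submodule K M)

def IsMonomialGraded : Prop :=
  ∀ (u v : σ →₀ ℕ) (c : K) (m : M), m ∈ ℳ v → monomial u c • m ∈ ℳ (u + v)

variable {ℳ} in
theorem shiftTo_mem (hℳ : IsMonomialGraded ℳ) {g : M} {d : σ →₀ ℕ} (hg : g ∈ ℳ d)
    (u : σ →₀ ℕ) : shiftTo K d g u ∈ ℳ u := by
  unfold shiftTo
  split_ifs with hdu
  · simpa [tsub_add_cancel_of_le hdu] using hℳ (u - d) d 1 g hg
  · exact zero_mem _

section Decomposition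

variable {ℳ} [DecidableEq σ] [Decomposition ℳ]

theorem coe_decompose_monomial_smul_add (hℳ : IsMonomialGraded ℳ) (v : σ →₀ ℕ) (c : K) (m : M)
    (u : σ →₀ ℕ) :
    (decompose ℳ (monomial v c • m) (v + u) : M) = monomial v c • (decompose ℳ m u : M) := by
  induction m using Decomposition.inductionOn ℳ with
  | zero => simp
  | @homogeneous i m =>
    by_cases h : i = u
    · subst h
      rw [decompose_of_mem_same ℳ (hℳ v i c m m.2), decompose_coe, of_eq_same]
    · rw [decompose_of_mem_ne ℳ (hℳ v i c m m.2) (by simpa using h), decompose_coe,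
        of_eq_of_ne _ _ _ (Ne.symm h), ZeroMemClass.coe_zero, smul_zero]
  | add m m' hm hm' =>
    simp only [smul_add, decompose_add, DirectSum.add_apply, Submodule.coe_add, hm, hm']

theorem isHomogeneous_sup {N N' : Submodule (MvPolynomial σ K) M}
    (hN : N.IsHomogeneous ℳ) (hN' : N'.IsHomogeneous ℳ) : (N ⊔ N').IsHomogeneous ℳ := by
  intro u m hm
  obtain ⟨y, hy, z, hz, rfl⟩ := Submodule.mem_sup.mp hm
  rw [decompose_add, DirectSum.add_apply, Submodule.coe_add]
  exact add_mem (Submodule.mem_sup_left (hN u hy)) (Submodule.mem_sup_right (hN' u hz))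

theorem exists_finset_span_eq_of_isHomogeneous {N : Submodule (MvPolynomial σ K) M}
    (hN : N.IsHomogeneous ℳ) (hfg : N.FG) :
    ∃ G : Finset M, (∀ g ∈ G, SetLike.IsHomogeneousElem ℳ g) ∧
      Submodule.span (MvPolynomial σ K) (G : Set M) = N := by
  classical
  obtain ⟨F, rfl⟩ := hfg
  refine ⟨F.biUnion fun f => (decompose ℳ f).support.image fun u => (decompose ℳ f u : M), ?_, ?_⟩
  · simp only [mem_biUnion, mem_image]
    rintro _ ⟨f, -, u, -, rfl⟩
    exact ⟨u, (decompose ℳ f u).2⟩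
  · apply le_antisymm
    · rw [Submodule.span_le]
      intro g hg
      simp only [coe_biUnion, coe_image, Set.mem_iUnion, Set.mem_image] at hg
      obtain ⟨f, hf, u, -, rfl⟩ := hg
      exact hN u (Submodule.subset_span hf)
    · rw [Submodule.span_le]
      intro f hf
      rw [← sum_support_decompose ℳ f]
      exact Submodule.sum_mem _ fun u hu => Submodule.subset_span
        (mem_biUnion.mpr ⟨f, hf, mem_image_of_mem _ hu⟩)

open Pointwise in
theorem smul_coe_decompose_eq_zero (hℳ : IsMonomialGraded ℳ) (s : Set σ) {n : ℕ} {m : M}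
    (hm : ∀ f ∈ Ideal.span (X '' s : Set (MvPolynomial σ K)) ^ n, f • m = 0) (u : σ →₀ ℕ) :
    ∀ f ∈ Ideal.span (X '' s : Set (MvPolynomial σ K)) ^ n, f • (decompose ℳ m u : M) = 0 := by
  have hmon : (X '' s : Set (MvPolynomial σ K)) ^ n ⊆ MonoidHom.mrange (monomialOneHom K σ) :=
    Submonoid.pow_subset <| by
      rintro _ ⟨i, _, rfl⟩
      exact ⟨Multiplicative.ofAdd (Finsupp.single i 1), rfl⟩
  rw [Ideal.span, Submodule.span_pow] at hm ⊢
  intro f hf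
  induction hf using Submodule.span_induction with
  | mem f hf =>
    obtain ⟨w, rfl⟩ := hmon hf
    have hw : monomial (Multiplicative.toAdd w) (1 : K) • m = 0 := hm _ (Submodule.subset_span hf)
    show monomial (Multiplicative.toAdd w) (1 : K) • _ = 0
    rw [← coe_decompose_monomial_smul_add hℳ, hw, decompose_zero, DirectSum.zero_apply,
      ZeroMemClass.coe_zero]
  | zero => exact zero_smul _ _
  | add f f' _ _ hf hf' => rw [add_smul, hf, hf', add_zero]
  | smul a f _ hf => rw [smul_eq_mul, mul_smul, hf, smul_zero]

end Decomposition

variable [IsScalarTower K (MvPolynomial σ K) M]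

noncomputable def piece (N : Submodule (MvPolynomial σ K) M) (u : σ →₀ ℕ) : Submodule K M :=
  N.restrictScalars K ⊓ ℳ u

noncomputable def hilbertSeries (N : Submodule (MvPolynomial σ K) M) : MvPowerSeries σ ℤ :=
  fun u => Module.finrank K (piece ℳ N u)

theorem coeff_hilbertSeries (N : Submodule (MvPolynomial σ K) M) (u : σ →₀ ℕ) :
    MvPowerSeries.coeff u (hilbertSeries ℳ N) = Module.finrank K (piece ℳ N u) :=
  rfl

theorem piece_bot (u : σ →₀ ℕ) : piece ℳ ⊥ u = ⊥ := by
  rw [piece, Submodule.restrictScalars_bot, bot_inf_eq]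

theorem hilbertSeries_bot : hilbertSeries ℳ (⊥ : Submodule (MvPolynomial σ K) M) = 0 := by
  ext u
  rw [coeff_hilbertSeries, piece_bot, finrank_bot, map_zero, Nat.cast_zero]

variable {ℳ} [DecidableEq σ] [Decomposition ℳ]

theorem coe_decompose_smul_of_mem (hℳ : IsMonomialGraded ℳ) {g : M} {d : σ →₀ ℕ} (hg : g ∈ ℳ d)
    (f : MvPolynomial σ K) (u : σ →₀ ℕ) :
    (decompose ℳ (f • g) u : M) = f.coeff (u - d) • shiftTo K d g u := by
  unfold shiftTo
  induction f using MvPolynomial.induction_on' with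
  | monomial v c =>
    by_cases hvu : v + d = u
    · subst hvu
      rw [decompose_of_mem_same ℳ (hℳ v d c g hg), if_pos le_add_self, add_tsub_cancel_right,
        coeff_monomial, if_pos rfl, ← smul_assoc, smul_monomial, smul_eq_mul, mul_one]
    · rw [decompose_of_mem_ne ℳ (hℳ v d c g hg) hvu, coeff_monomial]
      split_ifs with hv hdu
      · exact absurd (by rw [hv, tsub_add_cancel_of_le hdu]) hvu
      all_goals simp
  | add f f' hf hf' =>
    rw [add_smul, decompose_add, DirectSum.add_apply, Submodule.coe_add, hf, hf', coeff_add,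
      add_smul]

theorem isHomogeneous_span_singleton (hℳ : IsMonomialGraded ℳ) {g : M} {d : σ →₀ ℕ}
    (hg : g ∈ ℳ d) : (MvPolynomial σ K ∙ g).IsHomogeneous ℳ := by
  intro u m hm
  obtain ⟨f, rfl⟩ := Submodule.mem_span_singleton.mp hm
  rw [coe_decompose_smul_of_mem hℳ hg]
  exact Submodule.smul_of_tower_mem _ _ (shiftTo_mem_span_singleton d g u)

theorem piece_span_singleton_sup (hℳ : IsMonomialGraded ℳ) {N : Submodule (MvPolynomial σ K) M}
    (hN : N.IsHomogeneous ℳ) {g : M} {d : σ →₀ ℕ} (hg : g ∈ ℳ d) (u : σ →₀ ℕ) :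
    piece ℳ ((MvPolynomial σ K ∙ g) ⊔ N) u = (K ∙ shiftTo K d g u) ⊔ piece ℳ N u := by
  apply le_antisymm
  · rintro m ⟨hm, hmu⟩
    obtain ⟨_, hz, y, hy, rfl⟩ := Submodule.mem_sup.mp hm
    obtain ⟨f, rfl⟩ := Submodule.mem_span_singleton.mp hz
    rw [← decompose_of_mem_same ℳ hmu, decompose_add, DirectSum.add_apply, Submodule.coe_add,
      coe_decompose_smul_of_mem hℳ hg]
    exact Submodule.add_mem_sup (Submodule.smul_mem _ _ (Submodule.mem_span_singleton_self _))
      ⟨hN u hy, (decompose ℳ y u).2⟩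
  · refine sup_le ?_ (inf_le_inf_right _ fun m hm => Submodule.mem_sup_right hm)
    rw [Submodule.span_singleton_le_iff_mem]
    exact ⟨Submodule.mem_sup_left (shiftTo_mem_span_singleton d g u), shiftTo_mem hℳ hg u⟩

theorem finiteDimensional_piece_span_singleton_sup (hℳ : IsMonomialGraded ℳ)
    {N : Submodule (MvPolynomial σ K) M} (hN : N.IsHomogeneous ℳ) {g : M} {d : σ →₀ ℕ}
    (hg : g ∈ ℳ d) (u : σ →₀ ℕ) [FiniteDimensional K (piece ℳ N u)] :
    FiniteDimensional K (piece ℳ ((MvPolynomial σ K ∙ g) ⊔ N) u) := by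
  rw [piece_span_singleton_sup hℳ hN hg u]
  infer_instance

theorem finrank_piece_span_singleton_sup_of_mem (hℳ : IsMonomialGraded ℳ)
    {N : Submodule (MvPolynomial σ K) M} (hN : N.IsHomogeneous ℳ) {g : M} {d : σ →₀ ℕ}
    (hg : g ∈ ℳ d) {u : σ →₀ ℕ} (hx : shiftTo K d g u ∈ N) :
    Module.finrank K (piece ℳ ((MvPolynomial σ K ∙ g) ⊔ N) u) = Module.finrank K (piece ℳ N u) := by
  rw [piece_span_singleton_sup hℳ hN hg u,
    sup_eq_right.mpr ((Submodule.span_singleton_le_iff_mem _ (piece ℳ N u)).mpr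
      (Submodule.mem_inf.mpr ⟨hx, shiftTo_mem hℳ hg u⟩))]

theorem finrank_piece_span_singleton_sup_of_notMem (hℳ : IsMonomialGraded ℳ)
    {N : Submodule (MvPolynomial σ K) M} (hN : N.IsHomogeneous ℳ) {g : M} {d : σ →₀ ℕ}
    (hg : g ∈ ℳ d) {u : σ →₀ ℕ} [FiniteDimensional K (piece ℳ N u)] (hx : shiftTo K d g u ∉ N) :
    Module.finrank K (piece ℳ ((MvPolynomial σ K ∙ g) ⊔ N) u) =
      Module.finrank K (piece ℳ N u) + 1 := by
  have hdisj := Submodule.disjoint_span_singleton_of_notMem (s := piece ℳ N u) fun h => hx h.1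
  have hrank := Submodule.finrank_sup_add_finrank_inf_eq (K ∙ shiftTo K d g u) (piece ℳ N u)
  rw [hdisj.symm.eq_bot, finrank_bot, add_zero,
    finrank_span_singleton fun h => hx (by rw [h]; exact zero_mem N)] at hrank
  rw [piece_span_singleton_sup hℳ hN hg u]
  omega

theorem hilbertSeries_span_singleton_sup (hℳ : IsMonomialGraded ℳ)
    {N : Submodule (MvPolynomial σ K) M} (hN : N.IsHomogeneous ℳ) {g : M} {d : σ →₀ ℕ}
    (hg : g ∈ ℳ d) [∀ u, FiniteDimensional K (piece ℳ N u)] :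
    hilbertSeries ℳ ((MvPolynomial σ K ∙ g) ⊔ N) = hilbertSeries ℳ N +
      MvPowerSeries.monomial d 1 * indicatorSeries ℤ {w | monomial w (1 : K) • g ∉ N} := by
  classical
  ext u
  rw [map_add, MvPowerSeries.coeff_monomial_mul, coeff_hilbertSeries, coeff_hilbertSeries]
  by_cases hx : shiftTo K d g u ∈ N
  · rw [finrank_piece_span_singleton_sup_of_mem hℳ hN hg hx]
    unfold shiftTo at hx
    split_ifs at hx ⊢ <;> simp [coeff_indicatorSeries, hx]
  · rw [finrank_piece_span_singleton_sup_of_notMem hℳ hN hg hx]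
    unfold shiftTo at hx
    split_ifs at hx with hdu
    · simp [coeff_indicatorSeries, hx, hdu]
    · exact absurd (zero_mem N) hx

theorem isHomogeneous_span_finset (hℳ : IsMonomialGraded ℳ) (G : Finset M)
    (hG : ∀ g ∈ G, SetLike.IsHomogeneousElem ℳ g) :
    (Submodule.span (MvPolynomial σ K) (G : Set M)).IsHomogeneous ℳ := by
  classical
  induction G using Finset.induction_on with
  | empty =>
    intro u m hm
    rw [coe_empty, Submodule.span_empty, Submodule.mem_bot] at hm
    simp [hm]
  | insert g G _ ih =>
    obtain ⟨d, hd⟩ := hG g (mem_insert_self g G)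
    rw [coe_insert, Submodule.span_insert]
    exact isHomogeneous_sup (isHomogeneous_span_singleton hℳ hd)
      (ih fun g' hg' => hG g' (mem_insert_of_mem hg'))

theorem finiteDimensional_piece_span_finset (hℳ : IsMonomialGraded ℳ) (G : Finset M)
    (hG : ∀ g ∈ G, SetLike.IsHomogeneousElem ℳ g) (u : σ →₀ ℕ) :
    FiniteDimensional K (piece ℳ (Submodule.span (MvPolynomial σ K) (G : Set M)) u) := by
  classical
  induction G using Finset.induction_on generalizing u with
  | empty =>
    rw [coe_empty, Submodule.span_empty, piece_bot]
    infer_instance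
  | insert g G _ ih =>
    have hG' : ∀ g' ∈ G, SetLike.IsHomogeneousElem ℳ g' := fun g' hg' =>
      hG g' (mem_insert_of_mem hg')
    obtain ⟨d, hd⟩ := hG g (mem_insert_self g G)
    have := ih hG' u
    rw [coe_insert, Submodule.span_insert]
    exact finiteDimensional_piece_span_singleton_sup hℳ (isHomogeneous_span_finset hℳ G hG') hd u

theorem hilbertSeries_span_finset_mem_withDenominator [Finite σ] (hℳ : IsMonomialGraded ℳ)
    (T : Finset σ) (G : Finset M) (hG : ∀ g ∈ G, SetLike.IsHomogeneousElem ℳ g)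
    (hnil : ∀ g ∈ G, ∃ n, ∀ i ∉ T, (X i : MvPolynomial σ K) ^ n • g = 0) :
    hilbertSeries ℳ (Submodule.span (MvPolynomial σ K) (G : Set M)) ∈ withDenominator ℤ T := by
  classical
  induction G using Finset.induction_on with
  | empty =>
    rw [coe_empty, Submodule.span_empty, hilbertSeries_bot]
    exact zero_mem _
  | insert g G _ ih =>
    have hG' : ∀ g' ∈ G, SetLike.IsHomogeneousElem ℳ g' := fun g' hg' =>
      hG g' (mem_insert_of_mem hg')
    obtain ⟨d, hd⟩ := hG g (mem_insert_self g G)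
    obtain ⟨n, hn⟩ := hnil g (mem_insert_self g G)
    have := finiteDimensional_piece_span_finset hℳ G hG'
    rw [coe_insert, Submodule.span_insert,
      hilbertSeries_span_singleton_sup hℳ (isHomogeneous_span_finset hℳ G hG') hd]
    refine add_mem (ih hG' fun g' hg' => hnil g' (mem_insert_of_mem hg')) ?_
    exact monomial_mul_mem_withDenominator (indicatorSeries_mem_withDenominator
      (isLowerSet_setOf_monomial_smul_notMem _ g) fun w hw i hi =>
        lt_of_monomial_smul_notMem (hn i hi) hw) _ _

end Graded

end MultigradedHilbertSeries

open MultigradedHilbertSeries in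
theorem statement12_general (K : Type) [Field K] (r k : ℕ)
    (M : Type) [AddCommGroup M] [Module (MvPolynomial (Fin r) K) M]
    [Module K M] [IsScalarTower K (MvPolynomial (Fin r) K) M]
    [Module.Finite (MvPolynomial (Fin r) K) M]
    (ℳ : (Fin r →₀ ℕ) → Submodule K M)
    (hM : DirectSum.IsInternal ℳ)
    (hMgr : ∀ (u v : Fin r →₀ ℕ) (c : K) (m : M), m ∈ ℳ v →
      (MvPolynomial.monomial u c) • m ∈ ℳ (u + v))
    -- p = ⟨x_1,…,x_k⟩ is an associated prime of M
    (p : Ideal (MvPolynomial (Fin r) K))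
    (hpdef : p = Ideal.span {f | ∃ i : Fin r, (i : ℕ) < k ∧ f = MvPolynomial.X i})
    -- H0 is the zeroth local cohomology H^0_p(M)
    (H0 : Submodule (MvPolynomial (Fin r) K) M)
    (hH0 : ∀ m : M, m ∈ H0 ↔ ∃ n : ℕ, ∀ s ∈ p ^ n, s • m = 0)
    -- `HS` is the multigraded Hilbert series of `H^0_p(M)`
    (HS : MvPowerSeries (Fin r) ℤ)
    (hHS : ∀ u : Fin r →₀ ℕ, MvPowerSeries.coeff u HS =
      (Module.finrank K ↥(Submodule.restrictScalars K H0 ⊓ ℳ u) : ℤ)) :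
    ∃ P : MvPolynomial (Fin r) ℤ,
      (∏ i ∈ Finset.univ.filter (fun i : Fin r => k ≤ (i : ℕ)),
        (1 - MvPowerSeries.X i)) * HS = ↑P := by
  classical
  let _ := hM.chooseDecomposition
  set T := Finset.univ.filter fun i : Fin r => k ≤ (i : ℕ)
  have hpT : p = Ideal.span (MvPolynomial.X '' ↑Tᶜ) := by
    rw [hpdef]
    congr 1
    ext f
    simp [T, eq_comm]
  rw [hpT] at hH0
  have hH0hom : H0.IsHomogeneous ℳ := fun u m hm =>
    let ⟨n, hn⟩ := (hH0 m).mp hm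
    (hH0 _).mpr ⟨n, smul_coe_decompose_eq_zero hMgr _ hn u⟩
  obtain ⟨G, hG, rfl⟩ :=
    exists_finset_span_eq_of_isHomogeneous hH0hom (IsNoetherian.noetherian H0)
  have hnil : ∀ g ∈ G, ∃ n, ∀ i ∉ T, (MvPolynomial.X i : MvPolynomial (Fin r) K) ^ n • g = 0 :=
    fun g hg =>
      let ⟨n, hn⟩ := (hH0 g).mp (Submodule.subset_span hg)
      ⟨n, fun i hi => hn _ (Ideal.pow_mem_pow
        (Ideal.subset_span (Set.mem_image_of_mem _ (by simpa using hi))) n)⟩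
  rw [show HS = hilbertSeries ℳ _ from MvPowerSeries.ext hHS]
  exact mem_withDenominator.mp (hilbertSeries_span_finset_mem_withDenominator hMgr T G hG hnil)

theorem statement12 (K : Type) [Field K] (r k : ℕ)
    (M : Type) [AddCommGroup M] [Module (MvPolynomial (Fin r) K) M]
    [Module K M] [IsScalarTower K (MvPolynomial (Fin r) K) M]
    [Module.Finite (MvPolynomial (Fin r) K) M]
    (ℳ : (Fin r →₀ ℕ) → Submodule K M)
    (hM : DirectSum.IsInternal ℳ)
    (hMgr : ∀ (u v : Fin r →₀ ℕ) (c : K) (m : M), m ∈ ℳ v →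
      (MvPolynomial.monomial u c) • m ∈ ℳ (u + v))
    -- p = ⟨x_1,…,x_k⟩ is an associated prime of M
    (p : Ideal (MvPolynomial (Fin r) K))
    (hpdef : p = Ideal.span {f | ∃ i : Fin r, (i : ℕ) < k ∧ f = MvPolynomial.X i})
    (hp : p.IsPrime)
    (hass : ∃ m : M, ∀ s : MvPolynomial (Fin r) K, s ∈ p ↔ s • m = 0)
    -- H0 is the zeroth local cohomology H^0_p(M)
    (H0 : Submodule (MvPolynomial (Fin r) K) M)
    (hH0 : ∀ m : M, m ∈ H0 ↔ ∃ n : ℕ, ∀ s ∈ p ^ n, s • m = 0)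
    -- `HS` is the multigraded Hilbert series of `H^0_p(M)`
    (HS : MvPowerSeries (Fin r) ℤ)
    (hHS : ∀ u : Fin r →₀ ℕ, MvPowerSeries.coeff u HS =
      (Module.finrank K ↥(Submodule.restrictScalars K H0 ⊓ ℳ u) : ℤ)) :
    ∃ P : MvPolynomial (Fin r) ℤ,
      (∏ i ∈ Finset.univ.filter (fun i : Fin r => k ≤ (i : ℕ)),
        (1 - MvPowerSeries.X i)) * HS = ↑P :=
  statement12_general K r k M ℳ hM hMgr p hpdef H0 hH0 HS hHS
end

section
/- Let M be a finitely generated ℕ^r-graded module over S = K[x_1,…,x_r] and let p = ⟨x_1,…,x_k⟩ with 0 < k < r be an associated prime of M. View M as a module over S_{c_p} = K[x_{k+1},…,x_r] by restriction of scalars, and let N be the S_{c_p}-submodule of M generated by {a ∈ M | √(Ann_S(a)) = p}. Then rk_{S_{c_p}}(N) = rk_{S_{c_p}}(H^0_p(M)). -/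
/-!
Both modules lie in `H⁰_p(M)`, and a module and a submodule with torsion quotient have the same
rank (`FractionRing` is flat), so it suffices to find, for every `m ∈ H⁰_p(M)`, a nonzero
`t ∈ K[x_{k+1},…,x_r]` with `t • m ∈ N`. All radicals of a primary decomposition of `Ann(m)`
contain `p`. Nonzero polynomials in the variables `x_i`, `i ≥ k`, avoid `p`, while every ideal
strictly larger than `p` contains one; so a product `t` of such polynomials lies in every
component whose radical is not `p` and outside the radicals of the others. Then `Ann(t • m)` is
the intersection of the `p`-primary components, so `t • m = 0` or `√Ann(t • m) = p`.
-/

set_option synthInstance.maxHeartbeats 1000000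
set_option maxHeartbeats 1000000

namespace MvPolynomial

variable {σ R : Type*} {s : Set σ}

theorem eq_zero_of_mem_supported_compl_of_mem_ideal_span_X_image [CommSemiring R]
    {f : MvPolynomial σ R} (hf : f ∈ supported R sᶜ) (hfs : f ∈ Ideal.span (X '' s)) :
    f = 0 := by
  rw [← support_eq_empty, Finset.eq_empty_iff_forall_notMem]
  intro d hd
  obtain ⟨i, his, hdi⟩ := mem_ideal_span_X_image.1 hfs d hd
  exact mem_supported.1 hf
    ((mem_vars_iff_mem_support i).2 ⟨d, hd, Finsupp.mem_support_iff.2 hdi⟩) his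

theorem exists_mem_supported_compl_sub_mem_ideal_span_X_image [CommRing R]
    (f : MvPolynomial σ R) : ∃ g ∈ supported R sᶜ, f - g ∈ Ideal.span (X '' s) := by
  induction f using MvPolynomial.induction_on with
  | C a => exact ⟨C a, Subalgebra.algebraMap_mem _ a, by simp⟩
  | add f₁ f₂ ih₁ ih₂ =>
    obtain ⟨g₁, hg₁, h₁⟩ := ih₁
    obtain ⟨g₂, hg₂, h₂⟩ := ih₂
    exact ⟨g₁ + g₂, add_mem hg₁ hg₂, by simpa [add_sub_add_comm] using add_mem h₁ h₂⟩
  | mul_X f i ih =>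
    obtain ⟨g, hg, hfg⟩ := ih
    by_cases hi : i ∈ s
    · refine ⟨0, zero_mem _, ?_⟩
      simpa using Ideal.mul_mem_left _ f (Ideal.subset_span (Set.mem_image_of_mem X hi))
    · refine ⟨g * X i, mul_mem hg (Algebra.subset_adjoin (Set.mem_image_of_mem X hi)), ?_⟩
      simpa [sub_mul] using Ideal.mul_mem_right (X i) _ hfg

theorem exists_mem_supported_compl_ne_zero_mem_of_lt [CommRing R]
    {q : Ideal (MvPolynomial σ R)} (hq : Ideal.span (X '' s) < q) :
    ∃ g ∈ supported R sᶜ, g ≠ 0 ∧ g ∈ q := by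
  obtain ⟨f, hfq, hfs⟩ := SetLike.exists_of_lt hq
  obtain ⟨g, hg, hfg⟩ := exists_mem_supported_compl_sub_mem_ideal_span_X_image (s := s) f
  refine ⟨g, hg, fun hg0 => hfs (by simpa [hg0] using hfg), ?_⟩
  simpa using sub_mem hfq (hq.le hfg)

end MvPolynomial

section PrimaryDecomposition

variable {S M : Type*} [CommRing S] [AddCommGroup M] [Module S M]

theorem Submodule.le_radical_annihilator_span_singleton_iff {p : Ideal S} (hp : p.FG) {m : M} :
    p ≤ (S ∙ m).annihilator.radical ↔ ∃ n : ℕ, ∀ s ∈ p ^ n, s • m = 0 := by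
  constructor
  · intro h
    obtain ⟨n, hn⟩ := Ideal.exists_pow_le_of_le_radical_of_fg h hp
    exact ⟨n, fun s hs => (mem_annihilator_span_singleton m s).1 (hn hs)⟩
  · rintro ⟨n, hn⟩ x hx
    exact ⟨n, (mem_annihilator_span_singleton m _).2 (hn _ (Ideal.pow_mem_pow hx n))⟩

open Classical in
theorem Submodule.annihilator_span_smul_eq_finsetInf_filter
    {c : Finset (Ideal S)} {m : M} (hc : c.inf id = (S ∙ m).annihilator)
    (hprim : ∀ Q ∈ c, Q.IsPrimary) {t : S} (ht : ∀ Q ∈ c, t ∈ Q ∨ t ∉ Q.radical) :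
    (S ∙ t • m).annihilator = {Q ∈ c | t ∉ Q.radical}.inf id := by
  ext x
  rw [Submodule.mem_annihilator_span_singleton, smul_smul,
    ← Submodule.mem_annihilator_span_singleton, ← hc]
  simp only [Submodule.mem_finsetInf, Finset.mem_filter, id_eq]
  constructor
  · rintro h Q ⟨hQ, htQ⟩
    exact ((Ideal.isPrimary_iff.1 (hprim Q hQ)).2 (h Q hQ)).resolve_right htQ
  · intro h Q hQ
    rcases ht Q hQ with htQ | htQ
    · exact Q.mul_mem_left x htQ
    · exact Q.mul_mem_right t (h Q ⟨hQ, htQ⟩)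

theorem exists_mem_smul_eq_zero_or_radical_annihilator_eq [IsNoetherianRing S] {p : Ideal S}
    {T : Submonoid S} (hTp : ∀ t ∈ T, t ∉ p) (hT : ∀ q : Ideal S, p < q → ∃ t ∈ T, t ∈ q)
    {m : M} (hm : p ≤ (S ∙ m).annihilator.radical) :
    ∃ t ∈ T, t • m = 0 ∨ (S ∙ t • m).annihilator.radical = p := by
  classical
  obtain ⟨c, hc, hprim⟩ : ∃ c : Finset (Ideal S), c.inf id = (S ∙ m).annihilator ∧
      ∀ Q ∈ c, Q.IsPrimary := Submodule.isLasker S S _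
  have hexists : ∀ Q ∈ {Q ∈ c | Q.radical ≠ p}, ∃ u ∈ T, u ∈ Q := by
    intro Q hQ
    obtain ⟨hQc, hQp⟩ := Finset.mem_filter.1 hQ
    have hpQ : p ≤ Q.radical := hm.trans (Ideal.radical_mono (hc ▸ Finset.inf_le hQc))
    obtain ⟨u, huT, n, hun⟩ := hT Q.radical (hpQ.lt_of_ne' hQp)
    exact ⟨u ^ n, pow_mem huT n, hun⟩
  choose u huT huQ using hexists
  set t := ∏ Q ∈ {Q ∈ c | Q.radical ≠ p}.attach, u Q.1 Q.2
  have htT : t ∈ T := prod_mem fun Q _ => huT Q.1 Q.2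
  have htbad : ∀ Q ∈ c, Q.radical ≠ p → t ∈ Q := fun Q hQ hQp =>
    have hQ' : Q ∈ {Q ∈ c | Q.radical ≠ p} := Finset.mem_filter.2 ⟨hQ, hQp⟩
    Q.mem_of_dvd (Finset.dvd_prod_of_mem _ (Finset.mem_attach _ ⟨Q, hQ'⟩)) (huQ Q hQ')
  have hrad : ∀ Q ∈ c, t ∉ Q.radical → Q.radical = p := fun Q hQ htQ =>
    by_contra fun hQp => htQ (Ideal.le_radical (htbad Q hQ hQp))
  have hann : (S ∙ t • m).annihilator = {Q ∈ c | t ∉ Q.radical}.inf id := by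
    refine Submodule.annihilator_span_smul_eq_finsetInf_filter hc hprim fun Q hQ => ?_
    by_cases hQp : Q.radical = p
    · exact Or.inr (hQp ▸ hTp t htT)
    · exact Or.inl (htbad Q hQ hQp)
  refine ⟨t, htT, ?_⟩
  rcases Finset.eq_empty_or_nonempty {Q ∈ c | t ∉ Q.radical} with hempty | ⟨Q₀, hQ₀⟩
  · left
    rwa [hempty, Finset.inf_empty, Submodule.annihilator_eq_top_iff,
      Submodule.span_singleton_eq_bot] at hann
  · right
    obtain ⟨hQ₀c, htQ₀⟩ := Finset.mem_filter.1 hQ₀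
    rw [hann, Ideal.radical_finset_inf hQ₀ fun Q hQ => ?_, id_eq, hrad Q₀ hQ₀c htQ₀]
    obtain ⟨hQc, htQ⟩ := Finset.mem_filter.1 hQ
    rw [id_eq, id_eq, hrad Q hQc htQ, hrad Q₀ hQ₀c htQ₀]

end PrimaryDecomposition

open TensorProduct in
theorem rk_eq_of_le_of_exists_smul_mem {R M : Type} [CommRing R] [IsDomain R] [AddCommGroup M]
    [Module R M] {N₁ N₂ : Submodule R M} (hle : N₁ ≤ N₂)
    (htors : ∀ m ∈ N₂, ∃ s : R, s ≠ 0 ∧ s • m ∈ N₁) :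
    rk R N₁ = rk R N₂ := by
  let Q := FractionRing R
  let ι := (Submodule.inclusion hle).baseChange Q
  have hinj : Function.Injective ι := by
    rw [LinearMap.baseChange_eq_ltensor]
    exact Module.Flat.lTensor_preserves_injective_linearMap _ (Submodule.inclusion_injective hle)
  have hsurj : Function.Surjective ι := by
    rw [← LinearMap.range_eq_top, ← Submodule.restrictScalars_eq_top_iff R, eq_top_iff,
      ← span_tmul_eq_top, Submodule.span_le]
    rintro _ ⟨q, n, rfl⟩
    obtain ⟨s, hs, hsn⟩ := htors n n.2
    have hs' : algebraMap R Q s ≠ 0 := (IsFractionRing.injective R Q).ne_iff' (map_zero _) |>.2 hs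
    refine ⟨((algebraMap R Q s)⁻¹ * q) ⊗ₜ[R] (⟨s • (n : M), hsn⟩ : N₁), ?_⟩
    have hsn' : Submodule.inclusion hle ⟨s • (n : M), hsn⟩ = s • n := rfl
    rw [LinearMap.baseChange_tmul, hsn', ← smul_tmul, Algebra.smul_def, ← mul_assoc,
      mul_inv_cancel₀ hs', one_mul]
  exact (LinearEquiv.ofBijective ι ⟨hinj, hsurj⟩).finrank_eq

theorem statement13_general (K : Type) [Field K] (r k : ℕ)
    (M : Type) [AddCommGroup M] [Module (MvPolynomial (Fin r) K) M]
    -- p = ⟨x_1,…,x_k⟩ is an associated prime of M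
    (p : Ideal (MvPolynomial (Fin r) K))
    (hpdef : p = Ideal.span {f | ∃ i : Fin r, (i : ℕ) < k ∧ f = MvPolynomial.X i})
    -- the subring S_{c_p} = K[x_{k+1},…,x_r]
    (Scp : Subalgebra K (MvPolynomial (Fin r) K))
    (hScp : Scp = Algebra.adjoin K
      {f : MvPolynomial (Fin r) K | ∃ i : Fin r, k ≤ (i : ℕ) ∧ f = MvPolynomial.X i})
    -- H0 is the zeroth local cohomology H^0_p(M)
    (H0 : Submodule (MvPolynomial (Fin r) K) M)
    (hH0 : ∀ m : M, m ∈ H0 ↔ ∃ n : ℕ, ∀ s ∈ p ^ n, s • m = 0) :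
    rk Scp ↥(Submodule.span Scp
        {a : M | ∃ I : Ideal (MvPolynomial (Fin r) K),
          (∀ s : MvPolynomial (Fin r) K, s ∈ I ↔ s • a = 0) ∧ I.radical = p}) =
      rk Scp ↥(Submodule.restrictScalars Scp H0) := by
  set s : Set (Fin r) := {i | (i : ℕ) < k}
  replace hpdef : p = Ideal.span (MvPolynomial.X '' s) := by
    rw [hpdef]; congr; ext; simp [s, eq_comm]
  replace hScp : Scp = MvPolynomial.supported K sᶜ := by
    rw [hScp, MvPolynomial.supported_eq_adjoin_X]; congr; ext; simp [s, eq_comm]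
  subst hpdef hScp
  let T := (MvPolynomial.supported K sᶜ).toSubmonoid ⊓ nonZeroDivisors (MvPolynomial (Fin r) K)
  have hTp : ∀ t ∈ T, t ∉ Ideal.span (MvPolynomial.X '' s) := fun t ht htp =>
    nonZeroDivisors.ne_zero ht.2
      (MvPolynomial.eq_zero_of_mem_supported_compl_of_mem_ideal_span_X_image ht.1 htp)
  have hT : ∀ q, Ideal.span (MvPolynomial.X '' s) < q → ∃ t ∈ T, t ∈ q := fun q hq =>
    have ⟨g, hg, hg0, hgq⟩ := MvPolynomial.exists_mem_supported_compl_ne_zero_mem_of_lt hq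
    ⟨g, ⟨hg, mem_nonZeroDivisors_of_ne_zero hg0⟩, hgq⟩
  have hpfg : (Ideal.span (MvPolynomial.X '' s : Set (MvPolynomial (Fin r) K))).FG :=
    IsNoetherian.noetherian _
  refine rk_eq_of_le_of_exists_smul_mem ?_ fun m hm => ?_
  · rw [Submodule.span_le]
    rintro a ⟨I, hI, hIp⟩
    have hIa : I = (_ ∙ a).annihilator :=
      Ideal.ext fun x => (hI x).trans (Submodule.mem_annihilator_span_singleton a x).symm
    exact (hH0 a).2 ((Submodule.le_radical_annihilator_span_singleton_iff hpfg).1 (hIa ▸ hIp.ge))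
  · obtain ⟨t, htT, ht⟩ := exists_mem_smul_eq_zero_or_radical_annihilator_eq hTp hT
      ((Submodule.le_radical_annihilator_span_singleton_iff hpfg).2 ((hH0 m).1 hm))
    refine ⟨⟨t, htT.1⟩, fun h => nonZeroDivisors.ne_zero htT.2 congr(Subtype.val $h), ?_⟩
    change t • m ∈ _
    rcases ht with ht0 | htrad
    · rw [ht0]
      exact zero_mem _
    · exact Submodule.subset_span ⟨_, Submodule.mem_annihilator_span_singleton _, htrad⟩

theorem statement13 (K : Type) [Field K] (r k : ℕ) (hk0 : 0 < k) (hkr : k < r)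
    (M : Type) [AddCommGroup M] [Module (MvPolynomial (Fin r) K) M]
    [Module K M] [IsScalarTower K (MvPolynomial (Fin r) K) M]
    [Module.Finite (MvPolynomial (Fin r) K) M]
    (ℳ : (Fin r →₀ ℕ) → Submodule K M)
    (hM : DirectSum.IsInternal ℳ)
    (hMgr : ∀ (u v : Fin r →₀ ℕ) (c : K) (m : M), m ∈ ℳ v →
      (MvPolynomial.monomial u c) • m ∈ ℳ (u + v))
    -- p = ⟨x_1,…,x_k⟩ is an associated prime of M
    (p : Ideal (MvPolynomial (Fin r) K))
    (hpdef : p = Ideal.span {f | ∃ i : Fin r, (i : ℕ) < k ∧ f = MvPolynomial.X i})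
    (hp : p.IsPrime)
    (hass : ∃ m : M, ∀ s : MvPolynomial (Fin r) K, s ∈ p ↔ s • m = 0)
    -- the subring S_{c_p} = K[x_{k+1},…,x_r]
    (Scp : Subalgebra K (MvPolynomial (Fin r) K))
    (hScp : Scp = Algebra.adjoin K
      {f : MvPolynomial (Fin r) K | ∃ i : Fin r, k ≤ (i : ℕ) ∧ f = MvPolynomial.X i})
    -- H0 is the zeroth local cohomology H^0_p(M)
    (H0 : Submodule (MvPolynomial (Fin r) K) M)
    (hH0 : ∀ m : M, m ∈ H0 ↔ ∃ n : ℕ, ∀ s ∈ p ^ n, s • m = 0) :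
    rk Scp ↥(Submodule.span Scp
        {a : M | ∃ I : Ideal (MvPolynomial (Fin r) K),
          (∀ s : MvPolynomial (Fin r) K, s ∈ I ↔ s • a = 0) ∧ I.radical = p}) =
      rk Scp ↥(Submodule.restrictScalars Scp H0) :=
  statement13_general K r k M p hpdef Scp hScp H0 hH0
end
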